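/- arXiv:1403.8117 — 6 statements merged into one kernel-verified Lean document; each statement's English description precedes it below -/
import Mathlib

section
/- Let X be a real random variable (with IID copies X_1, X_2, ...), μ > 0, m ≥ 1, δ ∈ (0, 1/2], α > 1, and n_k = 2^{k-1}. For k ≥ 2 let A_k = ∪_{j=n_{k-1}}^{n_k - 1} {X_j > (μj + m)^{1-δ}} and let g(k) = (Ḡ(m + μ n_{k-1}) - Ḡ(m + μ n_k))/Ḡ(m + μ n_1), where Ḡ(t) = ∫_t^∞ (1+s)^{-α} ds. Assume the inequality: sup over z ∈ {μ·2^k : k ≥ 0} of 6(1 + 2z + m)^α P(X > (z + m)^{1-δ}) / ((α - 1)(m + 1)^{α-1} μ) ≤ 1. Then 3 P(A_k)/g(k) ≤ 1 for every k ≥ 2. -/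
open MeasureTheory ProbabilityTheory Set

/-! With `N = n_{k-1} = 2^{k-2}`, the event `A_k` is a union of `N` events whose thresholds
`(μ j + m)^{1-δ}` are all at least `(μ N + m)^{1-δ}`, so by the union bound and identical
distribution `P(A_k) ≤ N p` with `p = P(X_1 > (μ N + m)^{1-δ})`. On the other side
`Ḡ(t) = (1+t)^{1-α}/(α-1)`, and as `s ↦ s^{-α}` decreases,
`Ḡ(m+μN) - Ḡ(m+2μN) ≥ μN (1+m+2μN)^{-α}`, while `Ḡ(m+μ) ≤ (1+m)^{1-α}/(α-1)`.
The hypothesis at `z = μN` bounds `3Np` by half of the resulting lower bound for `g(k)`. -/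

lemma integral_Ioi_one_add_rpow_neg {α t : ℝ} (hα : 1 < α) (ht : 0 < 1 + t) :
    ∫ s in Ioi t, (1 + s) ^ (-α) = (1 + t) ^ (1 - α) / (α - 1) := by
  have hshift : (fun s : ℝ => 1 + s) ⁻¹' Ioi (1 + t) = Ioi t := by
    ext s; simp
  rw [← hshift, (measurePreserving_add_left volume (1 : ℝ)).setIntegral_preimage_emb
    (MeasurableEquiv.addLeft (1 : ℝ)).measurableEmbedding (fun u => u ^ (-α)),
    integral_Ioi_rpow_of_lt (by linarith) ht, show -α + 1 = 1 - α by ring, ← neg_div_neg_eq,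
    neg_neg, neg_sub]

-- Both sides are `α - 1` times a bound for `∫ x in a..b, x ^ (-α)` by its integrand at `b`.
lemma mul_sub_mul_rpow_neg_le_rpow_one_sub_sub {α a b : ℝ} (hα : 1 < α) (ha : 0 < a)
    (hab : a ≤ b) :
    (α - 1) * ((b - a) * b ^ (-α)) ≤ a ^ (1 - α) - b ^ (1 - α) := by
  have h0 : (0 : ℝ) ∉ uIcc a b := notMem_uIcc_of_lt ha (ha.trans_le hab)
  have hint : ∫ x in a..b, x ^ (-α) = (a ^ (1 - α) - b ^ (1 - α)) / (α - 1) := by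
    rw [integral_rpow (Or.inr ⟨by linarith, h0⟩), show -α + 1 = 1 - α by ring,
      div_eq_div_iff (by linarith) (by linarith)]
    ring
  have hmono : (b - a) * b ^ (-α) ≤ ∫ x in a..b, x ^ (-α) := by
    have := intervalIntegral.integral_mono_on (μ := volume) (f := fun _ => b ^ (-α))
      (g := fun x => x ^ (-α)) hab intervalIntegrable_const
      (intervalIntegral.intervalIntegrable_rpow (Or.inr h0)) fun x hx =>
        Real.rpow_le_rpow_of_nonpos (ha.trans_le hx.1) hx.2 (by linarith)
    simpa [mul_comm] using this
  rw [hint, le_div_iff₀ (by linarith)] at hmono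
  linarith

lemma measureReal_biUnion_lt_le_card_mul {Ω ι : Type*} [MeasurableSpace Ω] {P : Measure Ω}
    [IsFiniteMeasure P] (s : Finset ι) {X : ι → Ω → ℝ} {Y : Ω → ℝ}
    (hident : ∀ j ∈ s, IdentDistrib (X j) Y P P) {c : ι → ℝ} {c₀ : ℝ}
    (hc : ∀ j ∈ s, c₀ ≤ c j) :
    P.real (⋃ j ∈ s, {ω | c j < X j ω}) ≤ s.card * P.real {ω | c₀ < Y ω} := by
  refine (measureReal_biUnion_finset_le _ _).trans ?_
  rw [← nsmul_eq_mul]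
  refine Finset.sum_le_card_nsmul _ _ _ fun j hj => ?_
  calc P.real {ω | c j < X j ω} ≤ P.real (X j ⁻¹' Ioi c₀) :=
        measureReal_mono fun ω hω => (hc j hj).trans_lt hω
    _ = P.real {ω | c₀ < Y ω} := by
        simp only [measureReal_def, (hident j hj).measure_mem_eq measurableSet_Ioi]; rfl

lemma measureReal_biUnion_Icc_two_mul_le {Ω : Type*} [MeasurableSpace Ω] {P : Measure Ω}
    [IsFiniteMeasure P] {X : ℕ → Ω → ℝ}
    (hident : ∀ i, 1 ≤ i → IdentDistrib (X i) (X 1) P P)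
    {μ m δ : ℝ} (hμ : 0 ≤ μ) (hm : 0 ≤ m) (hδ : δ ≤ 1) {N : ℕ} (hN : 1 ≤ N) :
    P.real (⋃ j ∈ Finset.Icc N (2 * N - 1), {ω | X j ω > (μ * j + m) ^ (1 - δ)}) ≤
      N * P.real {ω | X 1 ω > (μ * N + m) ^ (1 - δ)} := by
  have hcard : (Finset.Icc N (2 * N - 1)).card = N := by rw [Nat.card_Icc]; omega
  refine (measureReal_biUnion_lt_le_card_mul (c₀ := (μ * N + m) ^ (1 - δ)) _
    (fun j hj => hident j ?_) fun j hj => ?_).trans_eq (by rw [hcard])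
  · exact hN.trans (Finset.mem_Icc.1 hj).1
  · have hNj : (N : ℝ) ≤ j := by exact_mod_cast (Finset.mem_Icc.1 hj).1
    exact Real.rpow_le_rpow (by positivity) (by nlinarith) (by linarith)

lemma three_mul_mul_le_rpow_one_sub_sub_div {α a μ x p : ℝ} (hα : 1 < α) (ha : 0 < a)
    (hμ : 0 < μ) (hx : 0 ≤ x) (hp : 0 ≤ p)
    (h : 6 * (a + 2 * μ * x) ^ α * p / ((α - 1) * a ^ (α - 1) * μ) ≤ 1) :
    3 * (x * p) ≤
      ((a + μ * x) ^ (1 - α) - (a + 2 * μ * x) ^ (1 - α)) / (a + μ) ^ (1 - α) := by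
  set b := a + 2 * μ * x
  have hb : 0 < b := by positivity
  have hp' : 6 * b ^ α * p ≤ (α - 1) * a ^ (α - 1) * μ :=
    (div_le_one (mul_pos (mul_pos (by linarith) (Real.rpow_pos_of_pos ha _)) hμ)).1 h
  have ha_cancel : a ^ (α - 1) * a ^ (1 - α) = 1 := by rw [← Real.rpow_add ha]; simp
  have hb_cancel : b ^ (-α) * b ^ α = 1 := by rw [← Real.rpow_add hb]; simp
  have hdiff := mul_sub_mul_rpow_neg_le_rpow_one_sub_sub hα (by positivity : 0 < a + μ * x)
    (by nlinarith : a + μ * x ≤ b)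
  have hdiff_nonneg : 0 ≤ (α - 1) * ((b - (a + μ * x)) * b ^ (-α)) := by
    rw [show b - (a + μ * x) = μ * x by ring]
    exact mul_nonneg (by linarith) (by positivity)
  rw [le_div_iff₀ (Real.rpow_pos_of_pos (by positivity) _)]
  calc 3 * (x * p) * (a + μ) ^ (1 - α) ≤ 3 * (x * p) * a ^ (1 - α) :=
        mul_le_mul_of_nonneg_left (Real.rpow_le_rpow_of_nonpos ha (by linarith) (by linarith))
          (by positivity)
    _ = x * a ^ (1 - α) * b ^ (-α) / 2 * (6 * b ^ α * p) := by
        linear_combination (-3 * x * p * a ^ (1 - α)) * hb_cancel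
    _ ≤ x * a ^ (1 - α) * b ^ (-α) / 2 * ((α - 1) * a ^ (α - 1) * μ) :=
        mul_le_mul_of_nonneg_left hp' (by positivity)
    _ = (α - 1) * ((b - (a + μ * x)) * b ^ (-α)) / 2 := by
        linear_combination (x * b ^ (-α) / 2 * (α - 1) * μ) * ha_cancel
    _ ≤ _ := by linarith

theorem three_prob_Ak_le_g_general
    {Ω : Type*} [MeasurableSpace Ω] (P : Measure Ω) [IsProbabilityMeasure P]
    (X : ℕ → Ω → ℝ)
    (hident : ∀ i, 1 ≤ i → IdentDistrib (X i) (X 1) P P)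
    (μ m δ α : ℝ) (hμ : 0 < μ) (hm : 1 ≤ m)
    (hδ : δ ≤ 1 / 2) (hα : 1 < α)
    (n : ℕ → ℕ) (hn : ∀ k, 1 ≤ k → n k = 2 ^ (k - 1))
    (Gbar : ℝ → ℝ) (hG : ∀ t, Gbar t = ∫ s in Set.Ioi t, (1 + s) ^ (-α))
    (g : ℕ → ℝ)
    (hg : ∀ k, 2 ≤ k →
      g k = (Gbar (m + μ * n (k - 1)) - Gbar (m + μ * n k)) / Gbar (m + μ * n 1))
    (A : ℕ → Set Ω)
    (hA : ∀ k, A k =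
      ⋃ j ∈ Finset.Icc (n (k - 1)) (n k - 1), {ω | X j ω > (μ * j + m) ^ (1 - δ)})
    (hCI1 : ∀ j : ℕ,
      6 * (1 + 2 * (μ * 2 ^ j) + m) ^ α *
          (P {ω | X 1 ω > (μ * 2 ^ j + m) ^ (1 - δ)}).toReal /
        ((α - 1) * (m + 1) ^ (α - 1) * μ) ≤ 1) :
    ∀ k, 2 ≤ k → 3 * (P (A k)).toReal / g k ≤ 1 := by
  intro k hk
  set N : ℕ := 2 ^ (k - 2)
  have hN : (N : ℝ) = 2 ^ (k - 2) := by simp only [N, Nat.cast_pow, Nat.cast_ofNat]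
  have hnk₁ : n (k - 1) = N := by rw [hn _ (by omega), show k - 1 - 1 = k - 2 by omega]
  have hnk : n k = 2 * N := by rw [hn _ (by omega), ← pow_succ']; congr 1; omega
  have hμN : 0 ≤ μ * N := mul_nonneg hμ.le N.cast_nonneg
  have hPA : (P (A k)).toReal ≤ N * (P {ω | X 1 ω > (μ * N + m) ^ (1 - δ)}).toReal := by
    rw [hA, hnk₁, hnk]
    exact measureReal_biUnion_Icc_two_mul_le hident hμ.le (by linarith) (by linarith)
      Nat.one_le_two_pow
  have hGbar : ∀ t, 0 < 1 + t → Gbar t = (1 + t) ^ (1 - α) / (α - 1) := fun t ht =>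
    (hG t).trans (integral_Ioi_one_add_rpow_neg hα ht)
  have hgk : g k = ((1 + m + μ * N) ^ (1 - α) - (1 + m + 2 * μ * N) ^ (1 - α))
      / (1 + m + μ) ^ (1 - α) := by
    have hn₁ : (n 1 : ℝ) = 1 := by simp [hn 1 le_rfl]
    rw [hg k hk, hnk₁, hnk, hn₁, Nat.cast_mul, Nat.cast_ofNat, hGbar _ (by linarith),
      hGbar _ (by linarith), hGbar _ (by linarith), div_sub_div_same,
      div_div_div_cancel_right₀ (by linarith)]
    ring_nf
  have hCI := hCI1 (k - 2)
  rw [← hN, show 1 + 2 * (μ * N) + m = 1 + m + 2 * μ * N by ring, add_comm m 1] at hCI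
  have h3 : 3 * (P (A k)).toReal ≤ g k := by
    have := three_mul_mul_le_rpow_one_sub_sub_div hα (by linarith) hμ N.cast_nonneg
      ENNReal.toReal_nonneg hCI
    linarith
  exact div_le_one_of_le₀ h3 (le_trans (by positivity) h3)

/-- Lemma `3P(A_k)/g(k) ≤ 1`: under the parameter inequality (C_I_1),
the large-jump event `A_k` satisfies `3 P(A_k)/g(k) ≤ 1` for every `k ≥ 2`. -/
theorem three_prob_Ak_le_g
    {Ω : Type*} [MeasurableSpace Ω] (P : Measure Ω) [IsProbabilityMeasure P]
    (X : ℕ → Ω → ℝ) (hmeas : ∀ i, Measurable (X i))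
    (hindep : iIndepFun X P)
    (hident : ∀ i, 1 ≤ i → IdentDistrib (X i) (X 1) P P)
    (μ m δ α : ℝ) (hμ : 0 < μ) (hm : 1 ≤ m)
    (hδ0 : 0 < δ) (hδ : δ ≤ 1 / 2) (hα : 1 < α)
    (n : ℕ → ℕ) (hn : ∀ k, 1 ≤ k → n k = 2 ^ (k - 1))
    (Gbar : ℝ → ℝ) (hG : ∀ t, Gbar t = ∫ s in Set.Ioi t, (1 + s) ^ (-α))
    (g : ℕ → ℝ)
    (hg : ∀ k, 2 ≤ k →
      g k = (Gbar (m + μ * n (k - 1)) - Gbar (m + μ * n k)) / Gbar (m + μ * n 1))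
    (A : ℕ → Set Ω)
    (hA : ∀ k, A k =
      ⋃ j ∈ Finset.Icc (n (k - 1)) (n k - 1), {ω | X j ω > (μ * j + m) ^ (1 - δ)})
    (hCI1 : ∀ j : ℕ,
      6 * (1 + 2 * (μ * 2 ^ j) + m) ^ α *
          (P {ω | X 1 ω > (μ * 2 ^ j + m) ^ (1 - δ)}).toReal /
        ((α - 1) * (m + 1) ^ (α - 1) * μ) ≤ 1) :
    ∀ k, 2 ≤ k → 3 * (P (A k)).toReal / g k ≤ 1 :=
  three_prob_Ak_le_g_general P X hident μ m δ α hμ hm hδ hα n hn Gbar hG g hg A hA hCI1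
end

section
/- Let (X_k : k ≥ 1) be IID copies of a real random variable X with E[X] = 0 and E[X²] < ∞, let μ > 0, m ≥ 1, δ ∈ (0, 1/2], α > 1, γ > 0, and n_k = 2^{k-1}. For k ≥ 2 set C_k = n_{k-1}μ + m, θ_k = γ/C_k^{1-δ}, ψ_k(θ_k) = log(E[exp(θ_k X) 1{X ≤ C_k^{1-δ}}]/P(X ≤ C_k^{1-δ})), T_m = inf{n ≥ 0 : S_n - μn > m}, and g(k) = (Ḡ(m + μ n_{k-1}) - Ḡ(m + μ n_k))/Ḡ(m + μ n_1) with Ḡ(t) = ∫_t^∞ (1+s)^{-α} ds. Assume E[X²]/m^{2(1-δ)} ≤ 1/2 and that for every z ∈ {μ·2^k : k ≥ 0}: exp(-γ(m+z)^δ + γ² e^γ E[X²] z/((m+z)^{2(1-δ)} μ) + 4(z/μ) P(X > (z+m)^{1-δ})) ≤ (α-1)(m+1)^{α-1}(1+2z+m)^{-α} z / 3. Then for every k ≥ 2, almost surely on the event {n_{k-1} ≤ T_m ≤ n_k - 1}, 3 exp(-θ_k S_{T_m} + T_m ψ_k(θ_k))/g(k) ≤ 1. -/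
open MeasureTheory ProbabilityTheory Filter Set Topology

/-!
On the event, `t = T_m` satisfies `n_{k-1} ≤ t < n_k` and `S_t > μ t + m`, so
`-θ_k S_t ≤ -θ_k (m + μ n_{k-1}) = -γ C_k^δ`. On `{X ≤ C_k^{1-δ}}` one has `θ_k X ≤ γ`, so the
second-order bound `e^y ≤ 1 + y + y² e^γ / 2`, `E[X] = 0`, and Chebyshev's inequality (which turns
`E[X²] ≤ m^{2(1-δ)}/2` into `P(X > C_k^{1-δ}) ≤ 1/2`) give
`ψ_k(θ_k) ≤ θ_k² e^γ E[X²]/2 + 2 P(X > C_k^{1-δ})`. As `t < 2 n_{k-1}`, the exponent is at most the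
one in the assumed exponential bound at `z = μ n_{k-1}`, and the closed form
`Ḡ(t) = (1+t)^{1-α}/(α-1)` shows that the right-hand side of that bound is at most `g(k)/3`.
-/

namespace Real

lemma exp_le_one_add_add_sq_div_two_of_nonpos {y : ℝ} (hy : y ≤ 0) :
    exp y ≤ 1 + y + y ^ 2 / 2 := by
  have hanti : Antitone fun t => exp (-t) * (1 + t + t ^ 2 / 2) := by
    refine antitone_of_hasDerivAt_nonpos (f' := fun t => -(exp (-t) * t ^ 2 / 2)) (fun t => ?_)
      fun t => by simp only [Pi.zero_apply, neg_nonpos]; positivity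
    exact (((hasDerivAt_neg t).exp).mul
      (((hasDerivAt_id t).const_add 1).add ((hasDerivAt_pow 2 t).div_const 2))).congr_deriv
      (by simp only [id, Pi.add_apply]; push_cast; ring)
  have h := hanti hy
  simp only [neg_zero, exp_zero] at h
  have hexp : exp y * exp (-y) = 1 := by rw [← exp_add]; simp
  have := exp_pos y
  nlinarith

lemma exp_le_one_add_add_sq_mul_exp_div_two_of_nonneg {y : ℝ} (hy : 0 ≤ y) :
    exp y ≤ 1 + y + y ^ 2 * exp y / 2 := by
  have hmono : MonotoneOn (fun t => exp (-t) * (1 + t) + t ^ 2 / 2) (Ici 0) := by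
    refine monotoneOn_of_hasDerivWithinAt_nonneg (f' := fun t => t * (1 - exp (-t)))
      (convex_Ici 0) (by fun_prop) (fun t _ => ?_) fun t ht => ?_
    · refine HasDerivAt.hasDerivWithinAt ?_
      exact ((((hasDerivAt_neg t).exp).mul ((hasDerivAt_id t).const_add 1)).add
        ((hasDerivAt_pow 2 t).div_const 2)).congr_deriv (by simp only [id]; push_cast; ring)
    · rw [interior_Ici] at ht
      have : exp (-t) ≤ 1 := exp_le_one_iff.mpr (by simpa using ht.le)
      exact mul_nonneg (le_of_lt ht) (by linarith)
  have h := hmono self_mem_Ici hy hy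
  simp only [neg_zero, exp_zero] at h
  have hexp : exp y * exp (-y) = 1 := by rw [← exp_add]; simp
  have := exp_pos y
  nlinarith

lemma exp_le_one_add_add_sq_mul_exp_div_two {y c : ℝ} (hc : 0 ≤ c) (hyc : y ≤ c) :
    exp y ≤ 1 + y + y ^ 2 * exp c / 2 := by
  rcases le_total y 0 with hy | hy
  · have : y ^ 2 / 2 ≤ y ^ 2 * exp c / 2 := by
      have := one_le_exp hc; nlinarith [sq_nonneg y]
    linarith [exp_le_one_add_add_sq_div_two_of_nonpos hy]
  · have : y ^ 2 * exp y / 2 ≤ y ^ 2 * exp c / 2 := by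
      have := exp_le_exp.mpr hyc; nlinarith [sq_nonneg y]
    linarith [exp_le_one_add_add_sq_mul_exp_div_two_of_nonneg hy]

lemma neg_two_mul_le_log_one_sub {q : ℝ} (hq0 : 0 ≤ q) (hq : q ≤ 1 / 2) :
    -(2 * q) ≤ log (1 - q) := by
  have h := one_sub_inv_le_log_of_pos (x := 1 - q) (by linarith)
  have : -(2 * q) ≤ 1 - (1 - q)⁻¹ := by
    rw [le_sub_iff_add_le, ← le_sub_iff_add_le', inv_le_iff_one_le_mul₀ (by linarith)]
    nlinarith
  linarith

end Real

lemma ENat.toNat_sInf_image_natCast_mem {s : Set ℕ} (h : sInf ((Nat.cast : ℕ → ℕ∞) '' s) ≠ ⊤) :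
    (sInf ((Nat.cast : ℕ → ℕ∞) '' s)).toNat ∈ s := by
  have hs : s.Nonempty := by
    by_contra h'
    simp [not_nonempty_iff_eq_empty.mp h'] at h
  rw [sInf_image, ← ENat.natCast_sInf hs, ENat.toNat_natCast]
  exact Nat.sInf_mem hs

noncomputable def paretoTail (α t : ℝ) : ℝ := ∫ s in Ioi t, (1 + s) ^ (-α)

lemma paretoTail_eq {α t : ℝ} (hα : 1 < α) (ht : -1 < t) :
    paretoTail α t = (1 + t) ^ (1 - α) / (α - 1) := by
  have hderiv : ∀ x ∈ Ici t,
      HasDerivAt (fun x => -(1 + x) ^ (1 - α) / (α - 1)) ((1 + x) ^ (-α)) x := by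
    intro x hx
    have hx0 : 0 < 1 + x := by linarith [show t ≤ x from hx]
    refine ((((hasDerivAt_id x).const_add 1).rpow_const (p := 1 - α)
      (Or.inl hx0.ne')).neg.div_const (α - 1)).congr_deriv ?_
    rw [show 1 - α - 1 = -α by ring, id]
    field_simp [show α - 1 ≠ 0 by linarith]
    ring
  have hlim : Tendsto (fun x => -(1 + x) ^ (1 - α) / (α - 1)) atTop (𝓝 0) := by
    have h := ((tendsto_rpow_neg_atTop (y := α - 1) (by linarith)).comp
      (tendsto_atTop_add_const_left _ 1 tendsto_id)).neg.div_const (α - 1)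
    simpa [neg_sub] using h
  rw [paretoTail, integral_Ioi_of_hasDerivAt_of_nonneg' hderiv
    (fun x hx => (Real.rpow_pos_of_pos (by linarith [show t < x from hx]) _).le) hlim]
  ring

lemma sub_mul_rpow_neg_le {α u v : ℝ} (hα : 1 < α) (hu : 0 < u) (huv : u ≤ v) :
    (v - u) * v ^ (-α) ≤ (u ^ (1 - α) - v ^ (1 - α)) / (α - 1) := by
  have h0 : (0 : ℝ) ∉ uIcc u v := by
    rw [uIcc_of_le huv]; exact fun h => absurd h.1 (not_le.mpr hu)
  have hint : ∫ x in u..v, x ^ (-α) = (u ^ (1 - α) - v ^ (1 - α)) / (α - 1) := by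
    rw [integral_rpow (Or.inr ⟨by linarith, h0⟩), show -α + 1 = 1 - α by ring,
      div_eq_div_iff (by linarith) (by linarith)]
    ring
  have hmono : ∫ _ in u..v, v ^ (-α) ≤ ∫ x in u..v, x ^ (-α) := by
    refine intervalIntegral.integral_mono_on huv intervalIntegrable_const ?_ fun x hx =>
      Real.rpow_le_rpow_of_nonpos (hu.trans_le hx.1) hx.2 (by linarith)
    exact intervalIntegral.intervalIntegrable_rpow (Or.inr h0)
  simpa [hint] using hmono

lemma le_paretoTail_sub_div {α m μ z : ℝ} (hα : 1 < α) (hm : 0 ≤ m) (hμ : 0 ≤ μ) (hz : 0 ≤ z) :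
    (α - 1) * (m + 1) ^ (α - 1) * (1 + 2 * z + m) ^ (-α) * z ≤
      (paretoTail α (m + z) - paretoTail α (m + 2 * z)) / paretoTail α (m + μ) := by
  have hdiff : z * (1 + 2 * z + m) ^ (-α) ≤
      paretoTail α (m + z) - paretoTail α (m + 2 * z) := by
    rw [paretoTail_eq hα (by linarith), paretoTail_eq hα (by linarith), ← sub_div]
    convert sub_mul_rpow_neg_le hα (by linarith : (0:ℝ) < 1 + (m + z))
      (by linarith : 1 + (m + z) ≤ 1 + (m + 2 * z)) using 2 <;> ring_nf
  have hden : (paretoTail α (m + μ))⁻¹ = (α - 1) * (1 + (m + μ)) ^ (α - 1) := by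
    rw [paretoTail_eq hα (by linarith), inv_div, show 1 - α = -(α - 1) by ring,
      Real.rpow_neg (by linarith), div_inv_eq_mul, mul_comm]
  have hmono : (m + 1) ^ (α - 1) ≤ (1 + (m + μ)) ^ (α - 1) :=
    Real.rpow_le_rpow (by linarith) (by linarith) (by linarith)
  rw [div_eq_mul_inv, hden]
  calc (α - 1) * (m + 1) ^ (α - 1) * (1 + 2 * z + m) ^ (-α) * z
      ≤ (α - 1) * (1 + (m + μ)) ^ (α - 1) * (1 + 2 * z + m) ^ (-α) * z := by
        gcongr
    _ = z * (1 + 2 * z + m) ^ (-α) * ((α - 1) * (1 + (m + μ)) ^ (α - 1)) := by ring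
    _ ≤ _ := by gcongr

section TruncatedMGF

variable {Ω : Type*} [MeasurableSpace Ω] {P : Measure Ω} {Y : Ω → ℝ} {c : ℝ}

lemma toReal_measure_lt_le_integral_sq_div [IsFiniteMeasure P]
    (hsq : Integrable (fun ω => Y ω ^ 2) P) (hc : 0 < c) :
    (P {ω | c < Y ω}).toReal ≤ (∫ ω, Y ω ^ 2 ∂P) / c ^ 2 := by
  have hmarkov := mul_meas_ge_le_integral_of_nonneg (ae_of_all _ fun ω => sq_nonneg (Y ω)) hsq
    (c ^ 2)
  have hsub : {ω | c < Y ω} ⊆ {ω | c ^ 2 ≤ Y ω ^ 2} := fun ω hω =>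
    pow_le_pow_left₀ hc.le (le_of_lt hω) 2
  rw [le_div_iff₀ (by positivity), mul_comm]
  exact (mul_le_mul_of_nonneg_left (measureReal_mono hsub) (by positivity)).trans hmarkov

lemma toReal_measure_rpow_lt_le_half [IsFiniteMeasure P]
    (hsq : Integrable (fun ω => Y ω ^ 2) P) {m C p : ℝ} (hm : 0 < m) (hmC : m ≤ C) (hp : 0 ≤ p)
    (hY2 : (∫ ω, Y ω ^ 2 ∂P) / m ^ (2 * p) ≤ 1 / 2) :
    (P {ω | C ^ p < Y ω}).toReal ≤ 1 / 2 := by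
  have hc : 0 < C ^ p := Real.rpow_pos_of_pos (hm.trans_le hmC) p
  have hmC' : m ^ (2 * p) ≤ (C ^ p) ^ 2 := by
    rw [← Real.rpow_two, ← Real.rpow_mul (hm.le.trans hmC), mul_comm]
    exact Real.rpow_le_rpow hm.le hmC (by positivity)
  exact (toReal_measure_lt_le_integral_sq_div hsq hc).trans <|
    (div_le_div_of_nonneg_left (integral_nonneg fun ω => sq_nonneg _)
      (Real.rpow_pos_of_pos hm _) hmC').trans hY2

lemma integrableOn_exp_mul_setOf_le [IsFiniteMeasure P] (hY : Measurable Y) {θ : ℝ}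
    (hθ : 0 ≤ θ) : IntegrableOn (fun ω => Real.exp (θ * Y ω)) {ω | Y ω ≤ c} P := by
  refine Measure.integrableOn_of_bounded (M := Real.exp (θ * c)) (measure_ne_top P _)
    (by fun_prop) ((ae_restrict_iff' (measurableSet_le hY measurable_const)).mpr <|
      ae_of_all _ fun ω (hω : Y ω ≤ c) => ?_)
  rw [Real.norm_of_nonneg (Real.exp_pos _).le]
  exact Real.exp_le_exp.mpr (mul_le_mul_of_nonneg_left hω hθ)

variable [IsProbabilityMeasure P]

lemma setIntegral_exp_mul_le (hY : Measurable Y) (hint : Integrable Y P)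
    (hmean : ∫ ω, Y ω ∂P = 0) (hsq : Integrable (fun ω => Y ω ^ 2) P) {θ : ℝ} (hθ : 0 ≤ θ)
    (hc : 0 ≤ c) :
    ∫ ω in {ω | Y ω ≤ c}, Real.exp (θ * Y ω) ∂P ≤
      1 + θ ^ 2 * Real.exp (θ * c) * (∫ ω, Y ω ^ 2 ∂P) / 2 := by
  set s := {ω | Y ω ≤ c}
  have hs : MeasurableSet s := measurableSet_le hY measurable_const
  set K := θ ^ 2 * Real.exp (θ * c) / 2 with hK
  have hpoint : ∀ ω ∈ s, Real.exp (θ * Y ω) ≤ 1 + θ * Y ω + K * Y ω ^ 2 := fun ω hω => by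
    have := Real.exp_le_one_add_add_sq_mul_exp_div_two (mul_nonneg hθ hc)
      (mul_le_mul_of_nonneg_left (show Y ω ≤ c from hω) hθ)
    rw [hK]; linarith
  have hlin : ∫ ω in s, Y ω ∂P ≤ 0 := by
    have hcompl : 0 ≤ ∫ ω in sᶜ, Y ω ∂P := setIntegral_nonneg hs.compl fun ω hω =>
      hc.trans (le_of_lt (not_le.mp hω))
    linarith [integral_add_compl hs hint]
  have hsq_le : ∫ ω in s, Y ω ^ 2 ∂P ≤ ∫ ω, Y ω ^ 2 ∂P :=
    setIntegral_le_integral hsq (ae_of_all _ fun ω => sq_nonneg _)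
  have hconst : ∫ _ in s, (1 : ℝ) ∂P ≤ 1 := by
    simp [measureReal_le_one]
  have hlin_int : Integrable (fun ω => 1 + θ * Y ω) P := (integrable_const 1).fun_add
    (hint.const_mul θ)
  calc ∫ ω in s, Real.exp (θ * Y ω) ∂P
      ≤ ∫ ω in s, (1 + θ * Y ω + K * Y ω ^ 2) ∂P :=
        setIntegral_mono_on (integrableOn_exp_mul_setOf_le hY hθ)
          (hlin_int.fun_add (hsq.const_mul K)).integrableOn hs hpoint
    _ = ∫ _ in s, (1 : ℝ) ∂P + θ * ∫ ω in s, Y ω ∂P + K * ∫ ω in s, Y ω ^ 2 ∂P := by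
        rw [integral_add hlin_int.integrableOn (hsq.const_mul K).integrableOn,
          integral_add (integrable_const 1).integrableOn (hint.const_mul θ).integrableOn,
          integral_const_mul, integral_const_mul]
    _ ≤ 1 + θ * 0 + K * ∫ ω, Y ω ^ 2 ∂P := by gcongr
    _ = _ := by ring

lemma log_setIntegral_exp_mul_div_le (hY : Measurable Y) (hint : Integrable Y P)
    (hmean : ∫ ω, Y ω ∂P = 0) (hsq : Integrable (fun ω => Y ω ^ 2) P) {θ : ℝ} (hθ : 0 ≤ θ)
    (hc : 0 ≤ c) (hq : (P {ω | c < Y ω}).toReal ≤ 1 / 2) :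
    Real.log ((∫ ω in {ω | Y ω ≤ c}, Real.exp (θ * Y ω) ∂P) / (P {ω | Y ω ≤ c}).toReal) ≤
      θ ^ 2 * Real.exp (θ * c) * (∫ ω, Y ω ^ 2 ∂P) / 2 + 2 * (P {ω | c < Y ω}).toReal := by
  set q := (P {ω | c < Y ω}).toReal
  have hq0 : 0 ≤ q := ENNReal.toReal_nonneg
  have hPs : (P {ω | Y ω ≤ c}).toReal = 1 - q := by
    have h := probReal_compl_eq_one_sub (μ := P) (measurableSet_le hY (measurable_const (a := c)))
    simp only [compl_ofPred, not_le, measureReal_def] at h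
    linarith
  have hPs_pos : 0 < (P {ω | Y ω ≤ c}).toReal := by linarith
  have : NeZero (P.restrict {ω | Y ω ≤ c}) :=
    ⟨fun h => by simp [Measure.restrict_eq_zero.mp h] at hPs_pos⟩
  have hI_pos := integral_exp_pos (integrableOn_exp_mul_setOf_le (P := P) (c := c) hY hθ)
  have hM : 0 ≤ ∫ ω, Y ω ^ 2 ∂P := integral_nonneg fun ω => sq_nonneg _
  rw [Real.log_div hI_pos.ne' hPs_pos.ne', hPs]
  linarith [Real.log_le_sub_one_of_pos hI_pos, setIntegral_exp_mul_le hY hint hmean hsq hθ hc,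
    Real.neg_two_mul_le_log_one_sub hq0 hq]

end TruncatedMGF

lemma tilted_exponent_le {γ δ μ m z t S ψ M q : ℝ} (hγ : 0 ≤ γ) (hμ : 0 < μ) (hmz : 0 < m + z)
    (ht : 0 ≤ t) (hzt : z ≤ μ * t) (htz : μ * t ≤ 2 * z) (hS : μ * t + m < S) (hM : 0 ≤ M)
    (hq : 0 ≤ q) (hψ : ψ ≤ (γ / (m + z) ^ (1 - δ)) ^ 2 * Real.exp γ * M / 2 + 2 * q) :
    -(γ / (m + z) ^ (1 - δ)) * S + t * ψ ≤
      -γ * (m + z) ^ δ + γ ^ 2 * Real.exp γ * M * z / ((m + z) ^ (2 * (1 - δ)) * μ) +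
        4 * (z / μ) * q := by
  set c := (m + z) ^ (1 - δ)
  have hc : 0 < c := Real.rpow_pos_of_pos hmz _
  have hθ : 0 ≤ γ / c := div_nonneg hγ hc.le
  have hsplit : m + z = c * (m + z) ^ δ := by
    rw [← Real.rpow_add hmz, sub_add_cancel, Real.rpow_one]
  have hsq : (m + z) ^ (2 * (1 - δ)) = c ^ 2 := by
    rw [mul_comm, Real.rpow_mul hmz.le, Real.rpow_two]
  have hA : 0 ≤ (γ / c) ^ 2 * Real.exp γ * M / 2 + 2 * q := by positivity
  have hdrift : γ / c * (m + z) ≤ γ / c * S := mul_le_mul_of_nonneg_left (by linarith) hθ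
  have hvar : t * ψ ≤ 2 * z / μ * ((γ / c) ^ 2 * Real.exp γ * M / 2 + 2 * q) :=
    (mul_le_mul_of_nonneg_left hψ ht).trans <| mul_le_mul_of_nonneg_right
      ((le_div_iff₀ hμ).mpr (by linarith)) hA
  have hdrift_eq : γ / c * (m + z) = γ * (m + z) ^ δ := by
    conv_lhs => rw [hsplit]
    field_simp
  have hvar_eq : 2 * z / μ * ((γ / c) ^ 2 * Real.exp γ * M / 2 + 2 * q) =
      γ ^ 2 * Real.exp γ * M * z / ((m + z) ^ (2 * (1 - δ)) * μ) + 4 * (z / μ) * q := by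
    rw [hsq]; field_simp; ring
  linarith

lemma firstPassage_toNat_spec {S : ℕ → ℝ} {μ m : ℝ} {T : ℕ∞}
    (hT : T = sInf ((fun n : ℕ => (n : ℕ∞)) '' {n : ℕ | S n - μ * n > m})) {a b : ℕ}
    (ha : (a : ℕ∞) ≤ T) (hb : T ≤ b) :
    a ≤ T.toNat ∧ T.toNat ≤ b ∧ μ * T.toNat + m < S T.toNat := by
  have hT_fin : T ≠ ⊤ := ne_top_of_le_ne_top (ENat.natCast_ne_top b) hb
  have hmem := ENat.toNat_sInf_image_natCast_mem (hT ▸ hT_fin)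
  rw [← hT] at hmem
  rw [← ENat.natCast_toNat hT_fin, Nat.cast_le] at ha hb
  exact ⟨ha, hb, by linarith [show S T.toNat - μ * T.toNat > m from hmem]⟩

theorem three_tilted_likelihood_ratio_le_g_general
    {Ω : Type*} [MeasurableSpace Ω] (P : Measure Ω) [IsProbabilityMeasure P]
    (X : ℕ → Ω → ℝ) (hmeas : ∀ i, Measurable (X i))
    (hint : Integrable (X 1) P) (hmean : ∫ ω, X 1 ω ∂P = 0)
    (hsq : Integrable (fun ω => (X 1 ω) ^ 2) P)
    (μ m δ α γ : ℝ) (hμ : 0 < μ) (hm : 1 ≤ m)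
    (hδ : δ ≤ 1 / 2) (hα : 1 < α) (hγ : 0 < γ)
    (n : ℕ → ℕ) (hn : ∀ k, 1 ≤ k → n k = 2 ^ (k - 1))
    (C θ ψ : ℕ → ℝ)
    (hC : ∀ k, 2 ≤ k → C k = (n (k - 1) : ℝ) * μ + m)
    (hθ : ∀ k, 2 ≤ k → θ k = γ / (C k) ^ (1 - δ))
    (hψ : ∀ k, 2 ≤ k → ψ k =
      Real.log ((∫ ω in {ω | X 1 ω ≤ (C k) ^ (1 - δ)}, Real.exp (θ k * X 1 ω) ∂P) /
        (P {ω | X 1 ω ≤ (C k) ^ (1 - δ)}).toReal))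
    (Sraw : ℕ → Ω → ℝ)
    (Tm : Ω → ℕ∞)
    (hTm : ∀ ω, Tm ω =
      sInf ((fun nn : ℕ => (nn : ℕ∞)) '' {nn : ℕ | Sraw nn ω - μ * nn > m}))
    (Gbar : ℝ → ℝ) (hG : ∀ t, Gbar t = ∫ s in Set.Ioi t, (1 + s) ^ (-α))
    (g : ℕ → ℝ)
    (hg : ∀ k, 2 ≤ k →
      g k = (Gbar (m + μ * n (k - 1)) - Gbar (m + μ * n k)) / Gbar (m + μ * n 1))
    (hCm3 : (∫ ω, (X 1 ω) ^ 2 ∂P) / m ^ (2 * (1 - δ)) ≤ 1 / 2)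
    (hCI2 : ∀ j : ℕ,
      Real.exp (-γ * (m + μ * 2 ^ j) ^ δ +
          γ ^ 2 * Real.exp γ * (∫ ω, (X 1 ω) ^ 2 ∂P) * (μ * 2 ^ j) /
            ((m + μ * 2 ^ j) ^ (2 * (1 - δ)) * μ) +
          4 * ((μ * 2 ^ j) / μ) *
            (P {ω | X 1 ω > (μ * 2 ^ j + m) ^ (1 - δ)}).toReal) ≤
        (α - 1) * (m + 1) ^ (α - 1) * (1 + 2 * (μ * 2 ^ j) + m) ^ (-α) *
          (μ * 2 ^ j) / 3) :
    ∀ k, 2 ≤ k → ∀ᵐ ω ∂P,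
      ((n (k - 1) : ℕ∞) ≤ Tm ω ∧ Tm ω ≤ ((n k - 1 : ℕ) : ℕ∞)) →
        3 * Real.exp (-(θ k) * Sraw (Tm ω).toNat ω + ((Tm ω).toNat : ℝ) * ψ k) /
          g k ≤ 1 := by
  intro k hk
  obtain ⟨j, rfl⟩ : ∃ j, k = j + 2 := ⟨k - 2, by omega⟩
  refine ae_of_all _ fun ω ⟨hlow, hhigh⟩ => ?_
  have hn_prev : n (j + 2 - 1) = 2 ^ j := by simpa using hn (j + 1) (by omega)
  have hn_cur : n (j + 2) = 2 ^ (j + 1) := by simpa using hn (j + 2) (by omega)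
  have hn_one : n 1 = 1 := by simpa using hn 1 le_rfl
  rw [hn_prev] at hlow
  rw [hn_cur] at hhigh
  obtain ⟨hlow, hhigh, hS⟩ := firstPassage_toNat_spec (hTm ω) hlow hhigh
  have hCI := hCI2 j
  set t := (Tm ω).toNat
  set z := μ * 2 ^ j
  have hz : 0 < z := by positivity
  have hCk : C (j + 2) = m + z := by rw [hC _ hk, hn_prev]; push_cast; ring
  have hzt : z ≤ μ * t := mul_le_mul_of_nonneg_left (by exact_mod_cast hlow) hμ.le
  have htz : μ * t ≤ 2 * z := by
    have : (t : ℝ) ≤ 2 * 2 ^ j := by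
      exact_mod_cast (show t ≤ 2 * 2 ^ j by rw [← pow_succ']; omega)
    nlinarith
  have hq := toReal_measure_rpow_lt_le_half hsq (by linarith) (show m ≤ m + z by linarith)
    (by linarith) hCm3
  have hc : 0 < (m + z) ^ (1 - δ) := Real.rpow_pos_of_pos (by linarith) _
  have hψk := log_setIntegral_exp_mul_div_le (hmeas 1) hint hmean hsq
    (div_nonneg hγ.le hc.le) hc.le hq
  rw [div_mul_cancel₀ _ hc.ne'] at hψk
  have hexp := tilted_exponent_le hγ.le hμ (by linarith) (Nat.cast_nonneg t) hzt htz hS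
    (integral_nonneg fun ω => sq_nonneg _) ENNReal.toReal_nonneg hψk
  have hgk : g (j + 2) =
      (paretoTail α (m + z) - paretoTail α (m + 2 * z)) / paretoTail α (m + μ) := by
    rw [hg _ hk, show Gbar = paretoTail α from funext hG, hn_prev, hn_cur, hn_one]
    push_cast
    rw [show μ * 2 ^ (j + 1) = 2 * z by rw [pow_succ]; ring, mul_one]
  have hbound : 3 * Real.exp (-θ (j + 2) * Sraw t ω + t * ψ (j + 2)) ≤ g (j + 2) := by
    rw [hψ _ hk, hθ _ hk, hCk, hgk]
    simp only [gt_iff_lt, add_comm z m] at hCI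
    linarith [Real.exp_le_exp.mpr hexp, le_paretoTail_sub_div hα (by linarith : 0 ≤ m) hμ.le hz.le]
  exact div_le_one_of_le₀ hbound ((by positivity : (0 : ℝ) ≤ 3 * Real.exp _).trans hbound)

/-- Lemma `3 exp(-θ_k S_{T_m} + T_m ψ_k(θ_k))/g(k) ≤ 1`: under (C_m_3) and
(C_I_2), on the event `{n_{k-1} ≤ T_m ≤ n_k - 1}` the tilted likelihood ratio bound holds. -/
theorem three_tilted_likelihood_ratio_le_g
    {Ω : Type*} [MeasurableSpace Ω] (P : Measure Ω) [IsProbabilityMeasure P]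
    (X : ℕ → Ω → ℝ) (hmeas : ∀ i, Measurable (X i))
    (hindep : iIndepFun X P)
    (hident : ∀ i, 1 ≤ i → IdentDistrib (X i) (X 1) P P)
    (hint : Integrable (X 1) P) (hmean : ∫ ω, X 1 ω ∂P = 0)
    (hsq : Integrable (fun ω => (X 1 ω) ^ 2) P)
    (μ m δ α γ : ℝ) (hμ : 0 < μ) (hm : 1 ≤ m)
    (hδ0 : 0 < δ) (hδ : δ ≤ 1 / 2) (hα : 1 < α) (hγ : 0 < γ)
    (n : ℕ → ℕ) (hn : ∀ k, 1 ≤ k → n k = 2 ^ (k - 1))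
    (C θ ψ : ℕ → ℝ)
    (hC : ∀ k, 2 ≤ k → C k = (n (k - 1) : ℝ) * μ + m)
    (hθ : ∀ k, 2 ≤ k → θ k = γ / (C k) ^ (1 - δ))
    (hψ : ∀ k, 2 ≤ k → ψ k =
      Real.log ((∫ ω in {ω | X 1 ω ≤ (C k) ^ (1 - δ)}, Real.exp (θ k * X 1 ω) ∂P) /
        (P {ω | X 1 ω ≤ (C k) ^ (1 - δ)}).toReal))
    (Sraw : ℕ → Ω → ℝ)
    (hSraw : ∀ nn ω, Sraw nn ω = ∑ i ∈ Finset.Icc 1 nn, X i ω)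
    (Tm : Ω → ℕ∞)
    (hTm : ∀ ω, Tm ω =
      sInf ((fun nn : ℕ => (nn : ℕ∞)) '' {nn : ℕ | Sraw nn ω - μ * nn > m}))
    (Gbar : ℝ → ℝ) (hG : ∀ t, Gbar t = ∫ s in Set.Ioi t, (1 + s) ^ (-α))
    (g : ℕ → ℝ)
    (hg : ∀ k, 2 ≤ k →
      g k = (Gbar (m + μ * n (k - 1)) - Gbar (m + μ * n k)) / Gbar (m + μ * n 1))
    (hCm3 : (∫ ω, (X 1 ω) ^ 2 ∂P) / m ^ (2 * (1 - δ)) ≤ 1 / 2)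
    (hCI2 : ∀ j : ℕ,
      Real.exp (-γ * (m + μ * 2 ^ j) ^ δ +
          γ ^ 2 * Real.exp γ * (∫ ω, (X 1 ω) ^ 2 ∂P) * (μ * 2 ^ j) /
            ((m + μ * 2 ^ j) ^ (2 * (1 - δ)) * μ) +
          4 * ((μ * 2 ^ j) / μ) *
            (P {ω | X 1 ω > (μ * 2 ^ j + m) ^ (1 - δ)}).toReal) ≤
        (α - 1) * (m + 1) ^ (α - 1) * (1 + 2 * (μ * 2 ^ j) + m) ^ (-α) *
          (μ * 2 ^ j) / 3) :
    ∀ k, 2 ≤ k → ∀ᵐ ω ∂P,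
      ((n (k - 1) : ℕ∞) ≤ Tm ω ∧ Tm ω ≤ ((n k - 1 : ℕ) : ℕ∞)) →
        3 * Real.exp (-(θ k) * Sraw (Tm ω).toNat ω + ((Tm ω).toNat : ℝ) * ψ k) /
          g k ≤ 1 :=
  three_tilted_likelihood_ratio_le_g_general P X hmeas hint hmean hsq μ m δ α γ hμ hm hδ hα hγ n hn
    C θ ψ hC hθ hψ Sraw Tm hTm Gbar hG g hg hCm3 hCI2
end

section
/- Let X be a real random variable (with IID copies X_1, X_2, ...), μ > 0, m ≥ 1, δ ∈ (0, 1/2], α > 1, and n_k = 2^{k-1}. For k ≥ 2 let B_k = ∩_{j=1}^{n_k - 1} {X_j ≤ (μ n_{k-1} + m)^{1-δ}} and g(k) = (Ḡ(m + μ n_{k-1}) - Ḡ(m + μ n_k))/Ḡ(m + μ n_1), where Ḡ(t) = ∫_t^∞ (1+s)^{-α} ds. Assume the inequality: sup over z ∈ {μ·2^k : k ≥ 0} of 6(1 + 2z + m)^α P(X > (z + m)^{1-δ}) / ((α - 1)(m + 1)^{α-1} μ) ≤ 1. Then 3 P(B_k^c)/g(k) ≤ 1 for every k ≥ 2. -/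
/-!
Put `N = n_{k-1}`, `a = 1 + m + μN`, `b = 1 + m + 2μN` and let `q` be the tail of `X₁` at level
`(μN + m)^{1-δ}`. A union bound over the `n_k - 1 < 2N` identically distributed events making up
`B_kᶜ` gives `3 P(B_kᶜ) ≤ 6Nq`, and the parameter inequality at `z = μN` gives
`6Nq ≤ (α - 1)(m+1)^{α-1} μN b^{-α} = μN b^{-α} / Ḡ(m)`, as `Ḡ(t) = (1+t)^{1-α}/(α-1)`.
On the other side `Ḡ(a - 1) - Ḡ(b - 1) = ∫_a^b x^{-α} dx ≥ (b - a) b^{-α} = μN b^{-α}` and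
`Ḡ(m + μ) ≤ Ḡ(m)`, so `g(k) ≥ μN b^{-α} / Ḡ(m)`.
-/

open MeasureTheory ProbabilityTheory Set

/-- The closed form of `Ḡ(t) = ∫_t^∞ (1+s)^{-α} ds`. -/
noncomputable def powerTail (α t : ℝ) : ℝ := (1 + t) ^ (1 - α) / (α - 1)

lemma setIntegral_Ioi_one_add_rpow_neg {α t : ℝ} (hα : 1 < α) (ht : -1 < t) :
    ∫ s in Ioi t, (1 + s) ^ (-α) = powerTail α t := by
  have hshift := (measurePreserving_add_left volume (1 : ℝ)).setIntegral_preimage_emb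
    (MeasurableEquiv.addLeft (1 : ℝ)).measurableEmbedding (fun u => u ^ (-α)) (Ioi (1 + t))
  have hpre : (fun s : ℝ => 1 + s) ⁻¹' Ioi (1 + t) = Ioi t := by
    ext; simp
  rw [hpre] at hshift
  rw [hshift, integral_Ioi_rpow_of_lt (by linarith) (by linarith), powerTail,
    show -α + 1 = 1 - α by ring, ← neg_div_neg_eq, neg_neg, neg_sub]

lemma sub_mul_rpow_neg_le_rpow_sub_rpow {α a b : ℝ} (hα : 1 < α) (ha : 0 < a) (hab : a ≤ b) :
    (α - 1) * (b - a) * b ^ (-α) ≤ a ^ (1 - α) - b ^ (1 - α) := by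
  have hzero : (0 : ℝ) ∉ uIcc a b := by
    rw [uIcc_of_le hab]
    exact fun h => ha.not_ge h.1
  have hint : a ^ (1 - α) - b ^ (1 - α) = (α - 1) * ∫ x in a..b, x ^ (-α) := by
    rw [integral_rpow (Or.inr ⟨by linarith, hzero⟩), show -α + 1 = 1 - α by ring]
    field_simp [show (1 : ℝ) - α ≠ 0 by linarith]
    ring
  have hmono : ∫ _ in a..b, b ^ (-α) ≤ ∫ x in a..b, x ^ (-α) :=
    intervalIntegral.integral_mono_on hab intervalIntegrable_const
      (intervalIntegral.intervalIntegrable_rpow (Or.inr hzero))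
      fun x hx => Real.rpow_le_rpow_of_nonpos (ha.trans_le hx.1) hx.2 (by linarith)
  rw [intervalIntegral.integral_const, smul_eq_mul] at hmono
  rw [hint, mul_assoc]
  exact mul_le_mul_of_nonneg_left hmono (by linarith)

lemma sub_mul_one_add_rpow_neg_le_powerTail_sub {α a b : ℝ} (hα : 1 < α) (ha : -1 < a)
    (hab : a ≤ b) : (b - a) * (1 + b) ^ (-α) ≤ powerTail α a - powerTail α b := by
  have h := sub_mul_rpow_neg_le_rpow_sub_rpow hα (by linarith : 0 < 1 + a)
    (by linarith : 1 + a ≤ 1 + b)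
  rw [powerTail, powerTail, ← sub_div, le_div_iff₀ (by linarith)]
  linarith

lemma powerTail_pos {α t : ℝ} (hα : 1 < α) (ht : -1 < t) : 0 < powerTail α t := by
  have : 0 < 1 + t := by linarith
  unfold powerTail
  exact div_pos (Real.rpow_pos_of_pos this _) (by linarith)

lemma six_mul_le_powerTail_sub_div {α μ m N q : ℝ} (hα : 1 < α) (hμ : 0 < μ) (hm : -1 < m)
    (hN : 0 ≤ N)
    (h : 6 * (1 + 2 * (μ * N) + m) ^ α * q / ((α - 1) * (m + 1) ^ (α - 1) * μ) ≤ 1) :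
    6 * N * q ≤
      (powerTail α (m + μ * N) - powerTail α (m + μ * (2 * N))) / powerTail α (m + μ) := by
  set b := m + μ * (2 * N)
  have hμN : 0 ≤ μ * N := mul_nonneg hμ.le hN
  have hb : 0 < 1 + b := by linarith
  have hm1 : 0 < 1 + m := by linarith
  rw [show 1 + 2 * (μ * N) + m = 1 + b by ring, add_comm m 1,
    div_le_one (mul_pos (mul_pos (by linarith) (Real.rpow_pos_of_pos hm1 _)) hμ)] at h
  have hNq : 6 * N * q ≤ μ * N * (1 + b) ^ (-α) / powerTail α m := by
    have hform : μ * N * (1 + b) ^ (-α) / powerTail α m =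
        (α - 1) * (1 + m) ^ (α - 1) * μ * N / (1 + b) ^ α := by
      rw [powerTail, Real.rpow_neg hb.le, show 1 - α = -(α - 1) by ring, Real.rpow_neg hm1.le]
      field_simp
    rw [hform, le_div_iff₀ (by positivity)]
    nlinarith [mul_le_mul_of_nonneg_left h hN]
  have hanti : powerTail α (m + μ) ≤ powerTail α m := by
    have := sub_mul_one_add_rpow_neg_le_powerTail_sub hα hm (by linarith : m ≤ m + μ)
    nlinarith [Real.rpow_pos_of_pos (by linarith : 0 < 1 + (m + μ)) (-α)]
  have hincr := sub_mul_one_add_rpow_neg_le_powerTail_sub hα (a := m + μ * N) (b := b)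
    (by linarith) (by linarith)
  rw [show b - (m + μ * N) = μ * N by ring] at hincr
  calc 6 * N * q ≤ μ * N * (1 + b) ^ (-α) / powerTail α m := hNq
    _ ≤ μ * N * (1 + b) ^ (-α) / powerTail α (m + μ) :=
      div_le_div_of_nonneg_left (by positivity) (powerTail_pos hα (by linarith)) hanti
    _ ≤ _ := div_le_div_of_nonneg_right hincr (powerTail_pos hα (by linarith)).le

lemma measureReal_biUnion_preimage_le_card_mul {Ω ι β : Type*} [MeasurableSpace Ω]
    [MeasurableSpace β] {P : Measure Ω} {X : ι → Ω → β} {s : Finset ι} {i₀ : ι}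
    (hident : ∀ j ∈ s, IdentDistrib (X j) (X i₀) P P) {S : Set β} (hS : MeasurableSet S) :
    P.real (⋃ j ∈ s, X j ⁻¹' S) ≤ s.card * P.real (X i₀ ⁻¹' S) := by
  refine (measureReal_biUnion_finset_le s _).trans_eq ?_
  rw [Finset.sum_congr rfl fun j hj => show P.real (X j ⁻¹' S) = P.real (X i₀ ⁻¹' S) by
    simp only [measureReal_def, (hident j hj).measure_mem_eq hS], Finset.sum_const, nsmul_eq_mul]

theorem three_prob_Bk_compl_le_g_general
    {Ω : Type*} [MeasurableSpace Ω] (P : Measure Ω)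
    (X : ℕ → Ω → ℝ)
    (hident : ∀ i, 1 ≤ i → IdentDistrib (X i) (X 1) P P)
    (μ m δ α : ℝ) (hμ : 0 < μ) (hm : 1 ≤ m)
    (hα : 1 < α)
    (n : ℕ → ℕ) (hn : ∀ k, 1 ≤ k → n k = 2 ^ (k - 1))
    (Gbar : ℝ → ℝ) (hG : ∀ t, Gbar t = ∫ s in Set.Ioi t, (1 + s) ^ (-α))
    (g : ℕ → ℝ)
    (hg : ∀ k, 2 ≤ k →
      g k = (Gbar (m + μ * n (k - 1)) - Gbar (m + μ * n k)) / Gbar (m + μ * n 1))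
    (B : ℕ → Set Ω)
    (hB : ∀ k, B k =
      ⋂ j ∈ Finset.Icc 1 (n k - 1), {ω | X j ω ≤ (μ * n (k - 1) + m) ^ (1 - δ)})
    (hCI1 : ∀ j : ℕ,
      6 * (1 + 2 * (μ * 2 ^ j) + m) ^ α *
          (P {ω | X 1 ω > (μ * 2 ^ j + m) ^ (1 - δ)}).toReal /
        ((α - 1) * (m + 1) ^ (α - 1) * μ) ≤ 1) :
    ∀ k, 2 ≤ k → 3 * (P ((B k)ᶜ)).toReal / g k ≤ 1 := by
  intro k hk
  obtain ⟨i, rfl⟩ : ∃ i, k = i + 2 := ⟨k - 2, by omega⟩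
  set N : ℝ := 2 ^ i
  set c := (μ * N + m) ^ (1 - δ)
  have hN : 0 < N := by positivity
  have hn1 : (n 1 : ℝ) = 1 := by simp [hn 1 le_rfl]
  have hnk1 : (n (i + 2 - 1) : ℝ) = N := by simp [hn (i + 1) (by omega), N]
  have hnk : (n (i + 2) : ℝ) = 2 * N := by simp [hn (i + 2) (by omega), N, pow_succ, mul_comm]
  have hμN : 0 < μ * N := mul_pos hμ hN
  have hgk : g (i + 2) =
      (powerTail α (m + μ * N) - powerTail α (m + μ * (2 * N))) / powerTail α (m + μ) := by
    rw [hg _ hk, hnk1, hnk, hn1, mul_one, hG, hG, hG,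
      setIntegral_Ioi_one_add_rpow_neg hα (by linarith),
      setIntegral_Ioi_one_add_rpow_neg hα (by linarith),
      setIntegral_Ioi_one_add_rpow_neg hα (by linarith)]
  have hBc : (B (i + 2))ᶜ = ⋃ j ∈ Finset.Icc 1 (n (i + 2) - 1), X j ⁻¹' Ioi c := by
    rw [hB, compl_iInter₂, hnk1]
    simp only [compl_ofPred, not_le]
    rfl
  have hunion : P.real (B (i + 2))ᶜ ≤ 2 * N * P.real (X 1 ⁻¹' Ioi c) := by
    rw [hBc]
    refine (measureReal_biUnion_preimage_le_card_mul
      (fun j hj => hident j (Finset.mem_Icc.1 hj).1) measurableSet_Ioi).trans ?_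
    rw [Nat.card_Icc, Nat.add_sub_cancel, ← hnk]
    gcongr
    exact_mod_cast Nat.sub_le _ _
  have hcore := six_mul_le_powerTail_sub_div hα hμ (by linarith) hN.le (hCI1 i)
  rw [← hgk] at hcore
  have hle : 3 * P.real (B (i + 2))ᶜ ≤ g (i + 2) := by
    change 6 * N * P.real (X 1 ⁻¹' Ioi c) ≤ g (i + 2) at hcore
    linarith
  exact div_le_one_of_le₀ hle (le_trans (by positivity) hle)

/-- Lemma `3P(B_kᶜ)/g(k) ≤ 1`: under the parameter inequality (C_I_1),
the complement of the no-big-jump event `B_k` satisfies `3 P(B_kᶜ)/g(k) ≤ 1` for `k ≥ 2`. -/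
theorem three_prob_Bk_compl_le_g
    {Ω : Type*} [MeasurableSpace Ω] (P : Measure Ω) [IsProbabilityMeasure P]
    (X : ℕ → Ω → ℝ) (hmeas : ∀ i, Measurable (X i))
    (hindep : iIndepFun X P)
    (hident : ∀ i, 1 ≤ i → IdentDistrib (X i) (X 1) P P)
    (μ m δ α : ℝ) (hμ : 0 < μ) (hm : 1 ≤ m)
    (hδ0 : 0 < δ) (hδ : δ ≤ 1 / 2) (hα : 1 < α)
    (n : ℕ → ℕ) (hn : ∀ k, 1 ≤ k → n k = 2 ^ (k - 1))
    (Gbar : ℝ → ℝ) (hG : ∀ t, Gbar t = ∫ s in Set.Ioi t, (1 + s) ^ (-α))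
    (g : ℕ → ℝ)
    (hg : ∀ k, 2 ≤ k →
      g k = (Gbar (m + μ * n (k - 1)) - Gbar (m + μ * n k)) / Gbar (m + μ * n 1))
    (B : ℕ → Set Ω)
    (hB : ∀ k, B k =
      ⋂ j ∈ Finset.Icc 1 (n k - 1), {ω | X j ω ≤ (μ * n (k - 1) + m) ^ (1 - δ)})
    (hCI1 : ∀ j : ℕ,
      6 * (1 + 2 * (μ * 2 ^ j) + m) ^ α *
          (P {ω | X 1 ω > (μ * 2 ^ j + m) ^ (1 - δ)}).toReal /
        ((α - 1) * (m + 1) ^ (α - 1) * μ) ≤ 1) :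
    ∀ k, 2 ≤ k → 3 * (P ((B k)ᶜ)).toReal / g k ≤ 1 :=
  three_prob_Bk_compl_le_g_general P X hident μ m δ α hμ hm hα n hn Gbar hG g hg B hB hCI1
end

section
/- Let X be a real random variable with E[X] = 0 and E[X²] < ∞. Let δ ∈ (0, 1), u > 0, γ > 0, and set θ = γ/u^{1-δ}. If E[X²]/u^{2(1-δ)} ≤ 1/2, then E[exp(θX) | X ≤ u^{1-δ}] ≤ exp(γ² e^γ E[X²]/(2u^{2(1-δ)}) + 2P(X > u^{1-δ})) ≤ exp(A/u^{2(1-δ)}) with A = (γ² e^γ/2 + 2)·E[X²]. -/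
open MeasureTheory ProbabilityTheory Set

/-!
Write `t = u^{1-δ}`, so that `θ t = γ`. On `{X ≤ t}` we have `θ X ≤ γ`, hence
`exp (θ X) ≤ 1 + θ X + (θ X)² e^γ / 2`. Integrating over `{X ≤ t}`, the linear term is `≤ 0`
because `E X = 0` and `X > 0` off that set, so the numerator is at most `1 + c ≤ e^c` with
`c = γ² e^γ E X² / (2 t²)`. By Chebyshev, `p = P(X > t) ≤ E X² / t² ≤ 1/2`, and on `[0, 1/2]`
we have `e^{-2p} ≤ 1 - p = P(X ≤ t)`, which bounds the denominator. The second inequality is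
Chebyshev again.
-/

namespace Real

lemma one_add_mul_exp_le_exp_of_nonpos {a y : ℝ} (ha : 0 ≤ a) (hy : y ≤ 0) :
    1 + y * exp a ≤ exp y := by
  nlinarith [add_one_le_exp y, one_le_exp ha]

lemma exp_le_one_add_mul_exp_of_mem_Icc {a y : ℝ} (hy : y ∈ Icc 0 a) :
    exp y ≤ 1 + y * exp a := by
  have h_neg : 1 - y ≤ exp (-y) := one_sub_le_exp_neg y
  have h_inv : exp y * exp (-y) = 1 := by rw [← exp_add, add_neg_cancel, exp_zero]
  nlinarith [exp_pos y, exp_le_exp.2 hy.2, hy.1]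

lemma exp_le_one_add_add_sq_mul_exp_div_two_s11 {a x : ℝ} (ha : 0 ≤ a) (hx : x ≤ a) :
    exp x ≤ 1 + x + x ^ 2 * exp a / 2 := by
  set φ : ℝ → ℝ := fun y => 1 + y + y ^ 2 * exp a / 2 - exp y
  have hφ' : ∀ y, HasDerivAt φ (1 + y * exp a - exp y) y := fun y =>
    ((((hasDerivAt_id' y).const_add 1).add
      (((hasDerivAt_pow 2 y).mul_const (exp a)).div_const 2)).sub (hasDerivAt_exp y)).congr_deriv
      (by norm_num; ring)
  have hφ_cont : Continuous φ := continuous_iff_continuousAt.2 fun y => (hφ' y).continuousAt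
  -- `φ'` has the sign of its argument on `(-∞, a]`, so `φ` is minimal at `0`.
  suffices 0 ≤ φ x by simp only [φ] at this; linarith
  have hφ0 : φ 0 = 0 := by simp [φ]
  rcases le_total x 0 with hx0 | hx0
  · have : AntitoneOn φ (Iic 0) :=
      antitoneOn_of_hasDerivWithinAt_nonpos (convex_Iic 0) hφ_cont.continuousOn
        (fun y _ => (hφ' y).hasDerivWithinAt) fun y hy => by
          rw [interior_Iic] at hy
          linarith [one_add_mul_exp_le_exp_of_nonpos ha (le_of_lt hy)]
    simpa [hφ0] using this hx0 self_mem_Iic hx0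
  · have : MonotoneOn φ (Icc 0 a) :=
      monotoneOn_of_hasDerivWithinAt_nonneg (convex_Icc 0 a) hφ_cont.continuousOn
        (fun y _ => (hφ' y).hasDerivWithinAt) fun y hy => by
          rw [interior_Icc] at hy
          linarith [exp_le_one_add_mul_exp_of_mem_Icc (Ioo_subset_Icc_self hy)]
    simpa [hφ0] using this (left_mem_Icc.2 ha) ⟨hx0, hx⟩ hx0

lemma exp_neg_two_mul_le_one_sub {p : ℝ} (hp0 : 0 ≤ p) (hp : p ≤ 1 / 2) :
    exp (-(2 * p)) ≤ 1 - p := by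
  have h_mul : exp (-(2 * p)) * (2 * p + 1) ≤ 1 :=
    calc exp (-(2 * p)) * (2 * p + 1) ≤ exp (-(2 * p)) * exp (2 * p) := by
          gcongr; exact add_one_le_exp _
      _ = 1 := by rw [← exp_add, neg_add_cancel, exp_zero]
  nlinarith [mul_nonneg hp0 (by linarith : 0 ≤ 1 - 2 * p)]

end Real

section

variable {Ω : Type*} [MeasurableSpace Ω] {P : Measure Ω} {X : Ω → ℝ}

lemma measureReal_lt_le_integral_sq_div_sq [IsFiniteMeasure P]
    (hsq : Integrable (fun ω => X ω ^ 2) P) {t : ℝ} (ht : 0 < t) :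
    P.real {ω | t < X ω} ≤ (∫ ω, X ω ^ 2 ∂P) / t ^ 2 := by
  rw [le_div_iff₀ (by positivity), mul_comm]
  have h_sub : {ω | t < X ω} ⊆ {ω | t ^ 2 ≤ X ω ^ 2} := fun ω hω =>
    pow_le_pow_left₀ ht.le (le_of_lt hω) 2
  calc t ^ 2 * P.real {ω | t < X ω} ≤ t ^ 2 * P.real {ω | t ^ 2 ≤ X ω ^ 2} := by
        gcongr
        exact measure_ne_top _ _
    _ ≤ ∫ ω, X ω ^ 2 ∂P :=
        mul_meas_ge_le_integral_of_nonneg (ae_of_all _ fun ω => sq_nonneg _) hsq _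

lemma measureReal_le_eq_one_sub [IsProbabilityMeasure P] (hX : AEMeasurable X P) (t : ℝ) :
    P.real {ω | X ω ≤ t} = 1 - P.real {ω | t < X ω} := by
  rw [← probReal_compl_eq_one_sub₀ (nullMeasurableSet_lt aemeasurable_const hX)]
  congr 1
  ext ω
  simp

lemma setIntegral_setOf_le_nonpos_of_integral_eq_zero (hint : Integrable X P)
    (hmean : ∫ ω, X ω ∂P = 0) {t : ℝ} (ht : 0 ≤ t) :
    ∫ ω in {ω | X ω ≤ t}, X ω ∂P ≤ 0 := by
  have hs := nullMeasurableSet_le hint.aemeasurable (aemeasurable_const (b := t))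
  have h_compl : 0 ≤ ∫ ω in {ω | X ω ≤ t}ᶜ, X ω ∂P := by
    refine setIntegral_nonneg_of_ae_restrict ?_
    filter_upwards [ae_restrict_mem₀ hs.compl] with ω (hω : ¬X ω ≤ t)
    exact ht.trans (not_le.1 hω).le
  linarith [integral_add_compl₀ hs hint]

lemma setIntegral_exp_mul_le_one_add [IsProbabilityMeasure P] (hint : Integrable X P)
    (hmean : ∫ ω, X ω ∂P = 0) (hsq : Integrable (fun ω => X ω ^ 2) P) {θ t γ : ℝ}
    (hθ : 0 ≤ θ) (ht : 0 ≤ t) (hθt : θ * t ≤ γ) :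
    ∫ ω in {ω | X ω ≤ t}, Real.exp (θ * X ω) ∂P ≤
      1 + θ ^ 2 * Real.exp γ / 2 * ∫ ω, X ω ^ 2 ∂P := by
  set s := {ω | X ω ≤ t}
  have hs : NullMeasurableSet s P := nullMeasurableSet_le hint.aemeasurable aemeasurable_const
  have hγ : 0 ≤ γ := (mul_nonneg hθ ht).trans hθt
  have h_le : ∀ ω ∈ s, θ * X ω ≤ γ := fun ω hω => (mul_le_mul_of_nonneg_left hω hθ).trans hθt
  have h_exp_int : IntegrableOn (fun ω => Real.exp (θ * X ω)) s P := by
    refine (integrable_const (Real.exp γ)).mono'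
      (hint.aemeasurable.const_mul θ).exp.aestronglyMeasurable.restrict ?_
    filter_upwards [ae_restrict_mem₀ hs] with ω hω
    rw [Real.norm_eq_abs, Real.abs_exp]
    exact Real.exp_le_exp.2 (h_le ω hω)
  have hX_int := (hint.const_mul θ).integrableOn (s := s)
  have hsq_int := (hsq.const_mul (θ ^ 2 * Real.exp γ / 2)).integrableOn (s := s)
  have h_poly_int : IntegrableOn
      (fun ω => θ * X ω + θ ^ 2 * Real.exp γ / 2 * X ω ^ 2) s P := hX_int.add hsq_int
  calc ∫ ω in s, Real.exp (θ * X ω) ∂P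
      ≤ ∫ ω in s, (1 + (θ * X ω + θ ^ 2 * Real.exp γ / 2 * X ω ^ 2)) ∂P := by
        refine setIntegral_mono_on₀ h_exp_int
          ((integrable_const 1).integrableOn.add h_poly_int) hs fun ω hω => ?_
        linarith [Real.exp_le_one_add_add_sq_mul_exp_div_two_s11 hγ (h_le ω hω)]
    _ = P.real s + (θ * ∫ ω in s, X ω ∂P + θ ^ 2 * Real.exp γ / 2 * ∫ ω in s, X ω ^ 2 ∂P) := by
        rw [integral_add (integrable_const 1).integrableOn h_poly_int,
          integral_add hX_int hsq_int, integral_const_mul, integral_const_mul, setIntegral_const,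
          smul_eq_mul, mul_one]
    _ ≤ 1 + θ ^ 2 * Real.exp γ / 2 * ∫ ω, X ω ^ 2 ∂P := by
        have h_mean := setIntegral_setOf_le_nonpos_of_integral_eq_zero hint hmean ht
        have h_sq : ∫ ω in s, X ω ^ 2 ∂P ≤ ∫ ω, X ω ^ 2 ∂P :=
          setIntegral_le_integral hsq (ae_of_all _ fun ω => sq_nonneg _)
        have h_coef : 0 ≤ θ ^ 2 * Real.exp γ / 2 := by positivity
        linarith [measureReal_le_one (μ := P) (s := s), mul_nonpos_of_nonneg_of_nonpos hθ h_mean,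
          mul_le_mul_of_nonneg_left h_sq h_coef]

lemma setIntegral_exp_mul_div_measureReal_le [IsProbabilityMeasure P] (hint : Integrable X P)
    (hmean : ∫ ω, X ω ∂P = 0) (hsq : Integrable (fun ω => X ω ^ 2) P) {θ t γ : ℝ}
    (hθ : 0 ≤ θ) (ht : 0 < t) (hθt : θ * t ≤ γ) (hhalf : (∫ ω, X ω ^ 2 ∂P) / t ^ 2 ≤ 1 / 2) :
    (∫ ω in {ω | X ω ≤ t}, Real.exp (θ * X ω) ∂P) / P.real {ω | X ω ≤ t} ≤
      Real.exp (θ ^ 2 * Real.exp γ / 2 * (∫ ω, X ω ^ 2 ∂P) + 2 * P.real {ω | t < X ω}) := by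
  set c := θ ^ 2 * Real.exp γ / 2 * ∫ ω, X ω ^ 2 ∂P
  set p := P.real {ω | t < X ω}
  have h_num : ∫ ω in {ω | X ω ≤ t}, Real.exp (θ * X ω) ∂P ≤ Real.exp c :=
    (setIntegral_exp_mul_le_one_add hint hmean hsq hθ ht.le hθt).trans
      ((add_comm 1 c).trans_le (Real.add_one_le_exp c))
  have h_den : Real.exp (-(2 * p)) ≤ P.real {ω | X ω ≤ t} := by
    rw [measureReal_le_eq_one_sub hint.aemeasurable]
    exact Real.exp_neg_two_mul_le_one_sub measureReal_nonneg
      ((measureReal_lt_le_integral_sq_div_sq hsq ht).trans hhalf)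
  calc _ ≤ Real.exp c / Real.exp (-(2 * p)) :=
        div_le_div₀ (Real.exp_pos c).le h_num (Real.exp_pos _) h_den
    _ = Real.exp (c + 2 * p) := by rw [← Real.exp_sub, sub_neg_eq_add]

end

theorem truncated_tilted_mgf_bound_finite_variance_general
    {Ω : Type*} [MeasurableSpace Ω] (P : Measure Ω) [IsProbabilityMeasure P]
    (X : Ω → ℝ)
    (hint : Integrable X P) (hmean : ∫ ω, X ω ∂P = 0)
    (hsq : Integrable (fun ω => (X ω) ^ 2) P)
    (δ u γ θ : ℝ) (hu : 0 < u) (hγ : 0 < γ)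
    (hθ : θ = γ / u ^ (1 - δ))
    (hhalf : (∫ ω, (X ω) ^ 2 ∂P) / u ^ (2 * (1 - δ)) ≤ 1 / 2) :
    (∫ ω in {ω | X ω ≤ u ^ (1 - δ)}, Real.exp (θ * X ω) ∂P) /
        (P {ω | X ω ≤ u ^ (1 - δ)}).toReal ≤
      Real.exp (γ ^ 2 * Real.exp γ * (∫ ω, (X ω) ^ 2 ∂P) / (2 * u ^ (2 * (1 - δ))) +
        2 * (P {ω | X ω > u ^ (1 - δ)}).toReal) ∧
    Real.exp (γ ^ 2 * Real.exp γ * (∫ ω, (X ω) ^ 2 ∂P) / (2 * u ^ (2 * (1 - δ))) +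
        2 * (P {ω | X ω > u ^ (1 - δ)}).toReal) ≤
      Real.exp (((γ ^ 2 * Real.exp γ / 2 + 2) * ∫ ω, (X ω) ^ 2 ∂P) /
        u ^ (2 * (1 - δ))) := by
  set t := u ^ (1 - δ)
  have ht : 0 < t := Real.rpow_pos_of_pos hu _
  have ht_sq : u ^ (2 * (1 - δ)) = t ^ 2 := by rw [mul_comm, Real.rpow_mul hu.le, Real.rpow_two]
  have hθt : θ * t = γ := by rw [hθ, div_mul_cancel₀ _ ht.ne']
  rw [ht_sq] at hhalf ⊢
  simp only [← measureReal_def, gt_iff_lt]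
  have h_coef : θ ^ 2 * Real.exp γ / 2 = γ ^ 2 * Real.exp γ / (2 * t ^ 2) := by
    rw [← hθt]; field_simp
  constructor
  · convert setIntegral_exp_mul_div_measureReal_le hint hmean hsq (by rw [hθ]; positivity) ht
      hθt.le hhalf using 3
    rw [h_coef]; ring
  · have h_tail := measureReal_lt_le_integral_sq_div_sq hsq ht
    refine Real.exp_le_exp.2 ?_
    linarith [show ((γ ^ 2 * Real.exp γ / 2 + 2) * ∫ ω, X ω ^ 2 ∂P) / t ^ 2 =
      γ ^ 2 * Real.exp γ * (∫ ω, X ω ^ 2 ∂P) / (2 * t ^ 2) + 2 * ((∫ ω, X ω ^ 2 ∂P) / t ^ 2) by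
        ring]

/-- truncated-tilted mgf bound, finite variance: if `E X = 0`,
`E X² < ∞` and `E X²/u^{2(1-δ)} ≤ 1/2`, then with `θ = γ/u^{1-δ}`,
`E[exp(θX) | X ≤ u^{1-δ}] ≤ exp(γ² e^γ E X²/(2u^{2(1-δ)}) + 2 P(X > u^{1-δ}))
≤ exp(A/u^{2(1-δ)})` with `A = (γ² e^γ/2 + 2)·E X²`. -/
theorem truncated_tilted_mgf_bound_finite_variance
    {Ω : Type*} [MeasurableSpace Ω] (P : Measure Ω) [IsProbabilityMeasure P]
    (X : Ω → ℝ) (hX : Measurable X)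
    (hint : Integrable X P) (hmean : ∫ ω, X ω ∂P = 0)
    (hsq : Integrable (fun ω => (X ω) ^ 2) P)
    (δ u γ θ : ℝ) (hδ0 : 0 < δ) (hδ1 : δ < 1) (hu : 0 < u) (hγ : 0 < γ)
    (hθ : θ = γ / u ^ (1 - δ))
    (hhalf : (∫ ω, (X ω) ^ 2 ∂P) / u ^ (2 * (1 - δ)) ≤ 1 / 2) :
    (∫ ω in {ω | X ω ≤ u ^ (1 - δ)}, Real.exp (θ * X ω) ∂P) /
        (P {ω | X ω ≤ u ^ (1 - δ)}).toReal ≤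
      Real.exp (γ ^ 2 * Real.exp γ * (∫ ω, (X ω) ^ 2 ∂P) / (2 * u ^ (2 * (1 - δ))) +
        2 * (P {ω | X ω > u ^ (1 - δ)}).toReal) ∧
    Real.exp (γ ^ 2 * Real.exp γ * (∫ ω, (X ω) ^ 2 ∂P) / (2 * u ^ (2 * (1 - δ))) +
        2 * (P {ω | X ω > u ^ (1 - δ)}).toReal) ≤
      Real.exp (((γ ^ 2 * Real.exp γ / 2 + 2) * ∫ ω, (X ω) ^ 2 ∂P) /
        u ^ (2 * (1 - δ))) :=
  truncated_tilted_mgf_bound_finite_variance_general P X hint hmean hsq δ u γ θ hu hγ hθ hhalf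
end

section
/- Let X be a real random variable with E[X] = 0 and E|X|^{1+ε} < ∞ for some ε ∈ (0, 1). Let γ > 0, u ≥ 1, 0 < δ ≤ ε/2, and set θ = γ/u^{1-δ}. If E|X|^{1+ε}/u^{(1-δ)(1+ε)} ≤ 1/2, then E[exp(θX) | X ≤ u^{1-δ}] ≤ exp(A/u) with A = ((γ²/2)·(e^γ/(1-ε)) + 2)·E|X|^{1+ε}. -/
/-! Truncating at `v = u ^ (1 - δ)` forces `θ X ≤ γ`, and for `y ≤ 1` one has
`exp (γ y) ≤ 1 + γ y + max (γ ^ (1 + ε)) (γ² e^γ / 2) |y| ^ (1 + ε)`: a second-order Taylor bound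
when `γ y` is small or positive, the trivial `exp ≤ 1` when `γ y ≤ -1`. Integrating with `y = X / v`,
the linear term vanishes by `E X = 0`, while Markov's inequality keeps the normalising probability
`P (X ≤ v)` above `1 - E|X|^(1+ε) / v^(1+ε) ≥ 1/2`. Finally `δ ≤ ε / 2` gives `v ^ (1 + ε) ≥ u`. -/

open MeasureTheory ProbabilityTheory Set Real

theorem exp_le_quadratic_of_nonpos {t : ℝ} (ht : t ≤ 0) : exp t ≤ 1 + t + t ^ 2 / 2 := by
  have hderiv : ∀ x : ℝ, HasDerivAt (fun x => 1 + x + x ^ 2 / 2 - exp x) (1 + x - exp x) x :=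
    fun x => ((((hasDerivAt_id' x).const_add 1).add ((hasDerivAt_pow 2 x).div_const 2)).sub
      (hasDerivAt_exp x)).congr_deriv (by push_cast; ring)
  have hanti : Antitone fun x : ℝ => 1 + x + x ^ 2 / 2 - exp x :=
    antitone_of_deriv_nonpos (fun x => (hderiv x).differentiableAt) fun x => by
      rw [(hderiv x).deriv]
      linarith [add_one_le_exp x]
  have h := hanti ht
  simp only [exp_zero] at h
  linarith

theorem exp_le_quadratic_mul_exp_of_nonneg {t : ℝ} (ht : 0 ≤ t) :
    exp t ≤ 1 + t + t ^ 2 / 2 * exp t := by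
  have hderiv : ∀ x : ℝ, HasDerivAt (fun x => 1 + x + x ^ 2 / 2 * exp x - exp x)
      (1 - (1 - x) * exp x + x ^ 2 / 2 * exp x) x :=
    fun x => ((((hasDerivAt_id' x).const_add 1).add
      (((hasDerivAt_pow 2 x).div_const 2).mul (hasDerivAt_exp x))).sub
      (hasDerivAt_exp x)).congr_deriv (by push_cast; ring)
  have hmono : Monotone fun x : ℝ => 1 + x + x ^ 2 / 2 * exp x - exp x :=
    monotone_of_deriv_nonneg (fun x => (hderiv x).differentiableAt) fun x => by
      rw [(hderiv x).deriv]
      have h : (1 - x) * exp x ≤ 1 := by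
        simpa [← exp_add] using mul_le_mul_of_nonneg_right (one_sub_le_exp_neg x) (exp_pos x).le
      nlinarith [exp_pos x]
  have h := hmono ht
  simp only [exp_zero] at h
  linarith

theorem exp_sub_one_sub_le_abs_rpow_of_nonpos {t ε : ℝ} (ht : t ≤ 0) (hε0 : 0 ≤ ε)
    (hε1 : ε ≤ 1) : exp t - 1 - t ≤ |t| ^ (1 + ε) := by
  rcases le_total |t| 1 with hsmall | hlarge
  · calc exp t - 1 - t ≤ |t| ^ (2 : ℝ) := by
          rw [rpow_two, sq_abs]
          nlinarith [exp_le_quadratic_of_nonpos ht]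
      _ ≤ |t| ^ (1 + ε) :=
          rpow_le_rpow_of_exponent_ge' (abs_nonneg t) hsmall (by linarith) (by linarith)
  · calc exp t - 1 - t ≤ |t| := by
          rw [abs_of_nonpos ht]
          linarith [exp_le_one_iff.2 ht]
      _ ≤ |t| ^ (1 + ε) := self_le_rpow_of_one_le hlarge (by linarith)

theorem exp_mul_sub_one_sub_le_max_mul_abs_rpow {γ ε y : ℝ} (hγ : 0 ≤ γ) (hε0 : 0 ≤ ε)
    (hε1 : ε ≤ 1) (hy : y ≤ 1) :
    exp (γ * y) - 1 - γ * y ≤ max (γ ^ (1 + ε)) (γ ^ 2 / 2 * exp γ) * |y| ^ (1 + ε) := by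
  rcases le_total y 0 with hneg | hpos
  · calc exp (γ * y) - 1 - γ * y ≤ |γ * y| ^ (1 + ε) :=
          exp_sub_one_sub_le_abs_rpow_of_nonpos (mul_nonpos_of_nonneg_of_nonpos hγ hneg) hε0 hε1
      _ = γ ^ (1 + ε) * |y| ^ (1 + ε) := by
          rw [abs_mul, abs_of_nonneg hγ, mul_rpow hγ (abs_nonneg y)]
      _ ≤ _ := mul_le_mul_of_nonneg_right (le_max_left _ _) (by positivity)
  · have hγy : exp (γ * y) ≤ exp γ := exp_le_exp.2 (mul_le_of_le_one_right hγ hy)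
    have hy2 : y ^ 2 ≤ |y| ^ (1 + ε) := by
      rw [abs_of_nonneg hpos, ← rpow_two]
      exact rpow_le_rpow_of_exponent_ge' hpos hy (by linarith) (by linarith)
    calc exp (γ * y) - 1 - γ * y ≤ γ ^ 2 / 2 * exp (γ * y) * y ^ 2 := by
          nlinarith [exp_le_quadratic_mul_exp_of_nonneg (mul_nonneg hγ hpos)]
      _ ≤ γ ^ 2 / 2 * exp γ * |y| ^ (1 + ε) := by gcongr
      _ ≤ _ := mul_le_mul_of_nonneg_right (le_max_right _ _) (by positivity)

theorem rpow_one_add_le_sq_div_two_mul_exp_add_half {γ ε : ℝ} (hγ : 0 ≤ γ) (hε0 : 0 ≤ ε)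
    (hε1 : ε ≤ 1) : γ ^ (1 + ε) ≤ γ ^ 2 / 2 * exp γ + 1 / 2 := by
  rcases le_total γ 1 with hle | hge
  · have h : γ ^ (1 + ε) ≤ γ := by
      simpa using rpow_le_rpow_of_exponent_ge' hγ hle zero_le_one (by linarith : (1 : ℝ) ≤ 1 + ε)
    nlinarith [one_le_exp hγ, sq_nonneg (γ - 1)]
  · have h : γ ^ (1 + ε) ≤ γ ^ 2 := by
      rw [← rpow_two]
      exact rpow_le_rpow_of_exponent_le hge (by linarith)
    nlinarith [add_one_le_exp γ]

theorem max_rpow_sq_div_two_mul_exp_add_le {γ ε : ℝ} (hγ : 0 ≤ γ) (hε0 : 0 ≤ ε) (hε1 : ε < 1) :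
    max (γ ^ (1 + ε)) (γ ^ 2 / 2 * exp γ) + 3 / 2 ≤ γ ^ 2 / 2 * (exp γ / (1 - ε)) + 2 := by
  have h : γ ^ 2 / 2 * exp γ ≤ γ ^ 2 / 2 * (exp γ / (1 - ε)) :=
    mul_le_mul_of_nonneg_left (le_div_self (exp_pos γ).le (by linarith) (by linarith))
      (by positivity)
  have := rpow_one_add_le_sq_div_two_mul_exp_add_half hγ hε0 hε1.le
  have : max (γ ^ (1 + ε)) (γ ^ 2 / 2 * exp γ) ≤ γ ^ 2 / 2 * (exp γ / (1 - ε)) + 1 / 2 :=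
    max_le (by linarith) (by linarith)
  linarith

theorem one_add_mul_div_one_sub_le_exp {a x : ℝ} (hx0 : 0 ≤ x) (hx : x ≤ 1 / 2) :
    (1 + a * x) / (1 - x) ≤ exp ((a + 3 / 2) * x) := by
  have h : 1 ≤ (1 - x) * exp (3 / 2 * x) := by
    nlinarith [quadratic_le_exp_of_nonneg (by linarith : 0 ≤ 3 / 2 * x)]
  rw [div_le_iff₀ (by linarith), add_mul, exp_add]
  calc 1 + a * x ≤ exp (a * x) := by linarith [add_one_le_exp (a * x)]
    _ ≤ exp (a * x) * ((1 - x) * exp (3 / 2 * x)) := le_mul_of_one_le_right (exp_pos _).le h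
    _ = _ := by ring

section Truncation

variable {Ω : Type*} [MeasurableSpace Ω] {P : Measure Ω} [IsProbabilityMeasure P] {X : Ω → ℝ}
  {p : ℝ}

theorem one_sub_integral_abs_rpow_div_le_measureReal (hX : Measurable X)
    (hmom : Integrable (fun ω => |X ω| ^ p) P) (hp : 0 ≤ p) {v : ℝ} (hv : 0 < v) :
    1 - (∫ ω, |X ω| ^ p ∂P) / v ^ p ≤ P.real {ω | X ω ≤ v} := by
  have hmarkov := mul_meas_ge_le_integral_of_nonneg
    (ae_of_all P fun ω => rpow_nonneg (abs_nonneg (X ω)) p) hmom (v ^ p)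
  have htail : P.real {ω | v < X ω} ≤ P.real {ω | v ^ p ≤ |X ω| ^ p} :=
    measureReal_mono fun ω (hω : v < X ω) => rpow_le_rpow hv.le (hω.le.trans (le_abs_self _)) hp
  have hcompl : P.real {ω | v < X ω} = 1 - P.real {ω | X ω ≤ v} := by
    rw [← probReal_compl_eq_one_sub (measurableSet_le hX measurable_const)]
    congr 1
    ext ω
    simp
  rw [sub_le_comm, ← hcompl, le_div_iff₀ (rpow_pos_of_pos hv p)]
  linarith [mul_le_mul_of_nonneg_right htail (rpow_pos_of_pos hv p).le]

theorem setIntegral_exp_le_one_add_mul (hX : Measurable X) (hint : Integrable X P)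
    (hmean : ∫ ω, X ω ∂P = 0) (hmom : Integrable (fun ω => |X ω| ^ p) P) {γ v M : ℝ}
    (hγ : 0 ≤ γ) (hv : 0 < v) (hM : 0 ≤ M)
    (hbound : ∀ y ≤ 1, exp (γ * y) - 1 - γ * y ≤ M * |y| ^ p) :
    ∫ ω in {ω | X ω ≤ v}, exp (γ / v * X ω) ∂P ≤ 1 + M * ((∫ ω, |X ω| ^ p ∂P) / v ^ p) := by
  set g : Ω → ℝ := fun ω => 1 + γ / v * X ω + M / v ^ p * |X ω| ^ p
  have hlin : Integrable (fun ω => 1 + γ / v * X ω) P := (integrable_const 1).add (hint.const_mul _)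
  have hg : Integrable g P := hlin.add (hmom.const_mul _)
  have hle : ∀ ω, {ω | X ω ≤ v}.indicator (fun ω => exp (γ / v * X ω)) ω ≤ g ω := by
    intro ω
    by_cases hω : X ω ≤ v
    · rw [indicator_of_mem (show ω ∈ {ω | X ω ≤ v} from hω)]
      have h := hbound (X ω / v) ((div_le_one hv).2 hω)
      rw [abs_div, abs_of_pos hv, div_rpow (abs_nonneg _) hv.le] at h
      calc exp (γ / v * X ω) = exp (γ * (X ω / v)) := by ring_nf
        _ ≤ 1 + γ * (X ω / v) + M * (|X ω| ^ p / v ^ p) := by linarith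
        _ = g ω := by simp only [g]; ring
    · rw [indicator_of_notMem (show ω ∉ {ω | X ω ≤ v} from hω)]
      have h₁ : 0 ≤ γ / v * X ω := mul_nonneg (div_nonneg hγ hv.le) (hv.le.trans (not_le.1 hω).le)
      have h₂ : 0 ≤ M / v ^ p * |X ω| ^ p := by positivity
      simp only [g]
      linarith
  calc ∫ ω in {ω | X ω ≤ v}, exp (γ / v * X ω) ∂P
      = ∫ ω, {ω | X ω ≤ v}.indicator (fun ω => exp (γ / v * X ω)) ω ∂P :=
        (integral_indicator (measurableSet_le hX measurable_const)).symm
    _ ≤ ∫ ω, g ω ∂P :=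
        integral_mono_of_nonneg (ae_of_all _ fun ω => indicator_nonneg (fun ω _ => (exp_pos _).le) ω)
          hg (ae_of_all _ hle)
    _ = 1 + M * ((∫ ω, |X ω| ^ p ∂P) / v ^ p) := by
        simp only [g]
        rw [integral_add hlin (hmom.const_mul _), integral_add (integrable_const 1) (hint.const_mul _),
          integral_const, integral_const_mul, integral_const_mul, hmean]
        simp only [probReal_univ, smul_eq_mul, mul_one, mul_zero, add_zero]
        ring

theorem setIntegral_exp_div_measureReal_le (hX : Measurable X) (hint : Integrable X P)
    (hmean : ∫ ω, X ω ∂P = 0) (hmom : Integrable (fun ω => |X ω| ^ p) P) (hp : 0 ≤ p)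
    {γ v M : ℝ} (hγ : 0 ≤ γ) (hv : 0 < v) (hM : 0 ≤ M)
    (hbound : ∀ y ≤ 1, exp (γ * y) - 1 - γ * y ≤ M * |y| ^ p)
    (hhalf : (∫ ω, |X ω| ^ p ∂P) / v ^ p ≤ 1 / 2) :
    (∫ ω in {ω | X ω ≤ v}, exp (γ / v * X ω) ∂P) / P.real {ω | X ω ≤ v} ≤
      exp ((M + 3 / 2) * ((∫ ω, |X ω| ^ p ∂P) / v ^ p)) := by
  have hx0 : 0 ≤ (∫ ω, |X ω| ^ p ∂P) / v ^ p :=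
    div_nonneg (integral_nonneg fun ω => by positivity) (by positivity)
  calc _ ≤ (1 + M * ((∫ ω, |X ω| ^ p ∂P) / v ^ p)) / (1 - (∫ ω, |X ω| ^ p ∂P) / v ^ p) :=
        div_le_div₀ (by positivity) (setIntegral_exp_le_one_add_mul hX hint hmean hmom hγ hv hM hbound)
          (by linarith) (one_sub_integral_abs_rpow_div_le_measureReal hX hmom hp hv)
    _ ≤ _ := one_add_mul_div_one_sub_le_exp hx0 hhalf

end Truncation

theorem truncated_tilted_mgf_bound_over_u_general
    {Ω : Type*} [MeasurableSpace Ω] (P : Measure Ω) [IsProbabilityMeasure P]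
    (X : Ω → ℝ) (hX : Measurable X)
    (hint : Integrable X P) (hmean : ∫ ω, X ω ∂P = 0)
    (ε : ℝ) (hε0 : 0 < ε) (hε1 : ε < 1)
    (hmom : Integrable (fun ω => |X ω| ^ (1 + ε)) P)
    (δ u γ θ : ℝ) (hδε : δ ≤ ε / 2) (hu : 1 ≤ u) (hγ : 0 < γ)
    (hθ : θ = γ / u ^ (1 - δ))
    (hhalf : (∫ ω, |X ω| ^ (1 + ε) ∂P) / u ^ ((1 - δ) * (1 + ε)) ≤ 1 / 2) :
    (∫ ω in {ω | X ω ≤ u ^ (1 - δ)}, Real.exp (θ * X ω) ∂P) /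
        (P {ω | X ω ≤ u ^ (1 - δ)}).toReal ≤
      Real.exp ((((γ ^ 2 / 2) * (Real.exp γ / (1 - ε)) + 2) *
          ∫ ω, |X ω| ^ (1 + ε) ∂P) / u) := by
  subst hθ
  have hv : 0 < u ^ (1 - δ) := rpow_pos_of_pos (by linarith) _
  have hvpow : (u ^ (1 - δ)) ^ (1 + ε) = u ^ ((1 - δ) * (1 + ε)) :=
    (rpow_mul (by linarith) _ _).symm
  have hu_le : u ≤ (u ^ (1 - δ)) ^ (1 + ε) := by
    rw [hvpow]
    exact self_le_rpow_of_one_le hu (by nlinarith)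
  have hm : 0 ≤ ∫ ω, |X ω| ^ (1 + ε) ∂P := integral_nonneg fun ω => by positivity
  calc _ ≤ exp ((max (γ ^ (1 + ε)) (γ ^ 2 / 2 * exp γ) + 3 / 2) *
        ((∫ ω, |X ω| ^ (1 + ε) ∂P) / (u ^ (1 - δ)) ^ (1 + ε))) :=
        setIntegral_exp_div_measureReal_le hX hint hmean hmom (by linarith) hγ.le hv (by positivity)
          (fun y hy => exp_mul_sub_one_sub_le_max_mul_abs_rpow hγ.le hε0.le hε1.le hy)
          (hvpow ▸ hhalf)
    _ ≤ _ := by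
        rw [mul_div_assoc]
        gcongr exp (?_ * ?_)
        · exact max_rpow_sq_div_two_mul_exp_add_le hγ.le hε0.le hε1
        · exact div_le_div_of_nonneg_left hm (by linarith) hu_le

/-- truncated-tilted mgf bound, `u ≥ 1`, `δ ≤ ε/2`: under the hypotheses
of the `1+ε` moment bound together with `u ≥ 1` and `0 < δ ≤ ε/2`,
`E[exp(θX) | X ≤ u^{1-δ}] ≤ exp(A/u)` with `A = ((γ²/2)·(e^γ/(1-ε)) + 2)·E|X|^{1+ε}`. -/
theorem truncated_tilted_mgf_bound_over_u
    {Ω : Type*} [MeasurableSpace Ω] (P : Measure Ω) [IsProbabilityMeasure P]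
    (X : Ω → ℝ) (hX : Measurable X)
    (hint : Integrable X P) (hmean : ∫ ω, X ω ∂P = 0)
    (ε : ℝ) (hε0 : 0 < ε) (hε1 : ε < 1)
    (hmom : Integrable (fun ω => |X ω| ^ (1 + ε)) P)
    (δ u γ θ : ℝ) (hδ0 : 0 < δ) (hδε : δ ≤ ε / 2) (hu : 1 ≤ u) (hγ : 0 < γ)
    (hθ : θ = γ / u ^ (1 - δ))
    (hhalf : (∫ ω, |X ω| ^ (1 + ε) ∂P) / u ^ ((1 - δ) * (1 + ε)) ≤ 1 / 2) :
    (∫ ω in {ω | X ω ≤ u ^ (1 - δ)}, Real.exp (θ * X ω) ∂P) /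
        (P {ω | X ω ≤ u ^ (1 - δ)}).toReal ≤
      Real.exp ((((γ ^ 2 / 2) * (Real.exp γ / (1 - ε)) + 2) *
          ∫ ω, |X ω| ^ (1 + ε) ∂P) / u) :=
  truncated_tilted_mgf_bound_over_u_general P X hX hint hmean ε hε0 hε1 hmom δ u γ θ hδε hu hγ hθ
    hhalf
end

section
/- Let X be an integrable real random variable with E[X] = 0 such that P(X ∈ hℤ) < 1 for a given h > 0, and let μ ≥ h. Set c = E[h⌊X/h⌋], X' = h⌊X/h⌋ - c, and μ' = μ - c - h. Then c < 0, E[X'] = 0, μ' > 0, and almost surely X' - μ' ≥ X - μ; moreover X' takes values in a lattice of span h (shifted by -c). -/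
open MeasureTheory Set

/-! Rounding down to the lattice `hℤ` loses a nonnegative amount `X - h⌊X/h⌋ < h`, which is
strictly positive exactly off `hℤ`; since `X` leaves `hℤ` with positive probability, the rounded
mean `c` is strictly below `E[X] = 0`. Recentring by `c` restores mean zero, and the lost amount
is at most `h`, which the new drift `μ' = μ - c - h` absorbs. -/

namespace Int

variable {k : Type*} [Field k] [LinearOrder k] [IsStrictOrderedRing k] [FloorRing k] {x h : k}

theorem mul_floor_div_le (hh : 0 < h) : h * ⌊x / h⌋ ≤ x := by
  linarith [sub_floor_div_mul_nonneg x hh]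

theorem lt_mul_floor_div_add (hh : 0 < h) : x < h * ⌊x / h⌋ + h := by
  linarith [sub_floor_div_mul_lt x hh]

theorem mul_floor_div_eq_iff (hh : 0 < h) : h * ⌊x / h⌋ = x ↔ ∃ z : ℤ, x = h * z := by
  refine ⟨fun hx => ⟨⌊x / h⌋, hx.symm⟩, ?_⟩
  rintro ⟨z, rfl⟩
  rw [mul_div_cancel_left₀ _ hh.ne', floor_intCast]

end Int

namespace MeasureTheory

variable {Ω : Type*} [MeasurableSpace Ω] {P : Measure Ω} {X : Ω → ℝ} {h : ℝ}

theorem Integrable.mul_floor_div [IsFiniteMeasure P] (hX : Integrable X P) (hh : 0 < h) :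
    Integrable (fun ω => h * (⌊X ω / h⌋ : ℝ)) P := by
  have hgap : Integrable (fun ω => X ω - h * (⌊X ω / h⌋ : ℝ)) P := by
    refine Integrable.of_bound ?_ h (ae_of_all _ fun ω => ?_)
    · have hfloor : AEMeasurable (fun ω => (⌊X ω / h⌋ : ℝ)) P :=
        (measurable_from_top.comp Int.measurable_floor).comp_aemeasurable
          (hX.aemeasurable.div_const h)
      exact (hX.aemeasurable.sub (hfloor.const_mul h)).aestronglyMeasurable
    · rw [Real.norm_eq_abs, abs_le]
      constructor <;>
        linarith [Int.mul_floor_div_le (x := X ω) hh, Int.lt_mul_floor_div_add (x := X ω) hh]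
  exact (hX.sub hgap).congr (ae_of_all _ fun ω => sub_sub_cancel _ _)

theorem integral_mul_floor_div_lt_integral [IsFiniteMeasure P] (hX : Integrable X P)
    (hh : 0 < h) (hlat : P {ω | ∃ z : ℤ, X ω = h * z} < P univ) :
    ∫ ω, h * (⌊X ω / h⌋ : ℝ) ∂P < ∫ ω, X ω ∂P := by
  have hY := hX.mul_floor_div hh
  have hsupp : Function.support (fun ω => X ω - h * (⌊X ω / h⌋ : ℝ)) =
      {ω | ∃ z : ℤ, X ω = h * z}ᶜ := by
    ext ω
    simp [sub_eq_zero, eq_comm (a := X ω), Int.mul_floor_div_eq_iff hh]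
  have hgap : 0 < ∫ ω, (X ω - h * (⌊X ω / h⌋ : ℝ)) ∂P := by
    rw [integral_pos_iff_support_of_nonneg (fun ω => sub_nonneg.2 (Int.mul_floor_div_le hh))
      (hX.sub hY), hsupp, pos_iff_ne_zero]
    exact fun hcompl => hlat.ne (measure_congr (ae_eq_univ.2 hcompl))
  rw [integral_sub hX hY] at hgap
  linarith

end MeasureTheory

theorem lattice_domination_coupling_general
    {Ω : Type*} [MeasurableSpace Ω] (P : Measure Ω) [IsProbabilityMeasure P]
    (X : Ω → ℝ)
    (hint : Integrable X P) (hmean : ∫ ω, X ω ∂P = 0)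
    (h μ : ℝ) (hh : 0 < h) (hμ : h ≤ μ)
    (hlat : P {ω | ∃ z : ℤ, X ω = h * z} < 1)
    (c : ℝ) (hc : c = ∫ ω, h * (⌊X ω / h⌋ : ℝ) ∂P) :
    c < 0 ∧
    (∫ ω, (h * (⌊X ω / h⌋ : ℝ) - c) ∂P) = 0 ∧
    0 < μ - c - h ∧
    (∀ ω, (h * (⌊X ω / h⌋ : ℝ) - c) - (μ - c - h) ≥ X ω - μ) ∧
    (∀ ω, ∃ z : ℤ, h * (⌊X ω / h⌋ : ℝ) - c = h * (z : ℝ) - c) := by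
  have hc_neg : c < 0 := by
    rw [hc, ← hmean]
    exact integral_mul_floor_div_lt_integral hint hh (by rwa [measure_univ])
  have hmean' : ∫ ω, (h * (⌊X ω / h⌋ : ℝ) - c) ∂P = 0 := by
    rw [integral_sub (hint.mul_floor_div hh) (integrable_const c), ← hc]
    simp
  refine ⟨hc_neg, hmean', by linarith, fun ω => ?_, fun ω => ⟨⌊X ω / h⌋, rfl⟩⟩
  linarith [Int.lt_mul_floor_div_add (x := X ω) hh]

/-- lattice domination coupling: for an integrable zero-mean `X` with
`P(X ∈ hℤ) < 1`, `h > 0` and `μ ≥ h`, setting `c = E[h⌊X/h⌋]`, `X' = h⌊X/h⌋ - c` and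
`μ' = μ - c - h`, one has `c < 0`, `E X' = 0`, `μ' > 0`, `X' - μ' ≥ X - μ` pathwise, and
`X'` takes values in the lattice `hℤ - c`. -/
theorem lattice_domination_coupling
    {Ω : Type*} [MeasurableSpace Ω] (P : Measure Ω) [IsProbabilityMeasure P]
    (X : Ω → ℝ) (hX : Measurable X)
    (hint : Integrable X P) (hmean : ∫ ω, X ω ∂P = 0)
    (h μ : ℝ) (hh : 0 < h) (hμ : h ≤ μ)
    (hlat : P {ω | ∃ z : ℤ, X ω = h * z} < 1)
    (c : ℝ) (hc : c = ∫ ω, h * (⌊X ω / h⌋ : ℝ) ∂P) :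
    c < 0 ∧
    (∫ ω, (h * (⌊X ω / h⌋ : ℝ) - c) ∂P) = 0 ∧
    0 < μ - c - h ∧
    (∀ ω, (h * (⌊X ω / h⌋ : ℝ) - c) - (μ - c - h) ≥ X ω - μ) ∧
    (∀ ω, ∃ z : ℤ, h * (⌊X ω / h⌋ : ℝ) - c = h * (z : ℝ) - c) :=
  lattice_domination_coupling_general P X hint hmean h μ hh hμ hlat c hc
end
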